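/- arXiv:math/0108150 — 9 statements merged into one kernel-verified Lean document; each statement's English description precedes it below -/
import Mathlib

section
/- Let R be a principal ideal domain and let M be a k × n matrix over R. If S = A * M * B and S' = A' * M * B' are both diagonal matrices over R whose diagonal entries satisfy S_{i,i} ∣ S_{i+1,i+1} and S'_{i,i} ∣ S'_{i+1,i+1} for all applicable i, where A, A', B, B' are invertible over R, then for every i there is a unit u_i of R with S'_{i,i} = u_i * S_{i,i}. In other words, the Smith normal form of M is unique up to multiplying the diagonal entries by units. -/
open Matrix

section SNFAux

variable {R : Type*} [CommRing R]

open Matrix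

variable {R : Type*} [CommRing R]

/-- The ideal generated by the `t × t` minors of a matrix. -/
def snfMinorsIdeal {k n : ℕ} (t : ℕ) (M : Matrix (Fin k) (Fin n) R) : Ideal R :=
  Ideal.span (Set.range fun rc : (Fin t → Fin k) × (Fin t → Fin n) =>
    (M.submatrix rc.1 rc.2).det)

lemma snfMinorsIdeal_mul_left_le {k n t : ℕ} (A : Matrix (Fin k) (Fin k) R)
    (M : Matrix (Fin k) (Fin n) R) : snfMinorsIdeal t (A * M) ≤ snfMinorsIdeal t M := by
  rw [snfMinorsIdeal, Ideal.span_le]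
  rintro x ⟨⟨r, c⟩, rfl⟩
  simp only
  rw [Matrix.submatrix_mul A M r id c Function.bijective_id]
  have key : (A.submatrix r id * M.submatrix id c).det
      = ∑ f : Fin t → Fin k, (∏ i, A (r i) (f i)) • (M.submatrix f c).det := by
    have h1 : (A.submatrix r id * M.submatrix id c).det
        = Matrix.detRowAlternating (fun i => ∑ l, A (r i) l • (M.submatrix id c) l) := by
      congr 1
      ext i j
      simp [Matrix.mul_apply, Finset.sum_apply]
    rw [h1]
    show (Matrix.detRowAlternating (R := R) (n := Fin t)).toMultilinearMap
        (fun i => ∑ l, A (r i) l • (M.submatrix id c) l) = _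
    rw [(Matrix.detRowAlternating (R := R) (n := Fin t)).toMultilinearMap.map_sum]
    refine Finset.sum_congr rfl fun f _ => ?_
    show (Matrix.detRowAlternating (R := R) (n := Fin t)).toMultilinearMap
        (fun i => A (r i) (f i) • (M.submatrix id c) (f i)) = _
    rw [(Matrix.detRowAlternating (R := R) (n := Fin t)).toMultilinearMap.map_smul_univ]
    rfl
  rw [key]
  refine Ideal.sum_mem _ fun f _ => ?_
  rw [smul_eq_mul]
  exact Ideal.mul_mem_left _ _ (Ideal.subset_span ⟨(f, c), rfl⟩)



lemma snf_fin_le_of_strictMono {t : ℕ} {f : Fin t → ℕ} (hf : StrictMono f) (j : Fin t) :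
    (j : ℕ) ≤ f j := by
  obtain ⟨m, hm⟩ := j
  induction m with
  | zero => exact Nat.zero_le _
  | succ m ih =>
      have h1 : f ⟨m, Nat.lt_of_succ_lt hm⟩ < f ⟨m + 1, hm⟩ := hf (by simp)
      exact Nat.succ_le_of_lt (lt_of_le_of_lt (ih _) h1)

lemma snf_dvd_chain {d : ℕ → R} (h : ∀ i, d i ∣ d (i + 1)) {i j : ℕ} (hij : i ≤ j) :
    d i ∣ d j := by
  induction j, hij using Nat.le_induction with
  | base => rfl
  | succ m _ ih => exact ih.trans (h m)

lemma snf_prod_dvd_of_inj {d : ℕ → R} (h : ∀ i, d i ∣ d (i + 1)) {t : ℕ} (e : Fin t → ℕ)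
    (he : Function.Injective e) : (∏ j : Fin t, d j) ∣ ∏ j, d (e j) := by
  set s : Finset ℕ := Finset.univ.image e with hs
  have hcard : s.card = t := by
    rw [hs, Finset.card_image_of_injective _ he, Finset.card_univ, Fintype.card_fin]
  have h2 : ∏ j, d (e j) = ∏ x ∈ s, d x := by
    rw [hs, Finset.prod_image (fun x _ y _ hxy => he hxy)]
  have h3 : ∏ x ∈ s, d x = ∏ j : Fin t, d (s.orderIsoOfFin hcard j) := by
    rw [← Finset.prod_coe_sort]
    exact (Equiv.prod_comp (s.orderIsoOfFin hcard).toEquiv (fun x : s => d x)).symm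
  rw [h2, h3]
  refine Finset.prod_dvd_prod_of_dvd _ _ fun j _ => snf_dvd_chain h ?_
  refine snf_fin_le_of_strictMono (f := fun j => ((s.orderIsoOfFin hcard j : ℕ))) ?_ j
  intro a b hab
  exact_mod_cast (s.orderIsoOfFin hcard).strictMono hab

lemma snf_minor_dvd {k n : ℕ} (S : Matrix (Fin k) (Fin n) R)
    (hdiag : ∀ (i : Fin k) (j : Fin n), (i : ℕ) ≠ (j : ℕ) → S i j = 0)
    (d : ℕ → R) (hd : ∀ i (hik : i < k) (hin : i < n), d i = S ⟨i, hik⟩ ⟨i, hin⟩)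
    (hchain : ∀ i, d i ∣ d (i + 1))
    (t : ℕ) (r : Fin t → Fin k) (c : Fin t → Fin n) :
    (∏ j : Fin t, d j) ∣ (S.submatrix r c).det := by
  classical
  by_cases hr : Function.Injective r
  · by_cases hc : Function.Injective c
    · rw [Matrix.det_apply]
      refine Finset.dvd_sum fun σ _ => ?_
      have hterm : (∏ j : Fin t, d (j : ℕ)) ∣ ∏ i, S.submatrix r c (σ i) i := by
        by_cases hall : ∀ i, ((r (σ i) : ℕ)) = (c i : ℕ)
        · have heq : ∀ i, S.submatrix r c (σ i) i = d ((c i : ℕ)) := by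
            intro i
            have hk : ((c i : ℕ)) < k := hall i ▸ (r (σ i)).isLt
            rw [Matrix.submatrix_apply, hd _ hk (c i).isLt]
            exact congrArg₂ S (Fin.ext (hall i)) (Fin.eta _ _).symm
          rw [Finset.prod_congr rfl fun i _ => heq i]
          exact snf_prod_dvd_of_inj hchain _ (fun a b hab => hc (Fin.val_injective hab))
        · push_neg at hall
          obtain ⟨i, hi⟩ := hall
          have hz : S.submatrix r c (σ i) i = 0 := hdiag _ _ hi
          have hp : ∏ i, S.submatrix r c (σ i) i = 0 :=
            Finset.prod_eq_zero (Finset.mem_univ i) hz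
          rw [hp]
          exact dvd_zero _
      rcases Int.units_eq_one_or (Equiv.Perm.sign σ) with h | h <;> rw [h]
      · simpa using hterm
      · simpa using hterm.neg_right
    · rw [Function.not_injective_iff] at hc
      obtain ⟨a, b, hab, hne⟩ := hc
      rw [Matrix.det_zero_of_column_eq hne (fun l => by simp [hab])]
      exact dvd_zero _
  · rw [Function.not_injective_iff] at hr
    obtain ⟨a, b, hab, hne⟩ := hr
    rw [Matrix.det_zero_of_row_eq hne (funext fun j => by simp [hab])]
    exact dvd_zero _
lemma snfMinorsIdeal_transpose_le {k n t : ℕ} (M : Matrix (Fin k) (Fin n) R) :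
    snfMinorsIdeal t Mᵀ ≤ snfMinorsIdeal t M := by
  rw [snfMinorsIdeal, Ideal.span_le]
  rintro x ⟨⟨r, c⟩, rfl⟩
  simp only
  rw [← Matrix.transpose_submatrix, Matrix.det_transpose]
  exact Ideal.subset_span ⟨(c, r), rfl⟩

lemma snfMinorsIdeal_transpose {k n t : ℕ} (M : Matrix (Fin k) (Fin n) R) :
    snfMinorsIdeal t Mᵀ = snfMinorsIdeal t M :=
  le_antisymm (snfMinorsIdeal_transpose_le M)
    (by simpa using snfMinorsIdeal_transpose_le Mᵀ)

lemma snfMinorsIdeal_mul_right_le {k n t : ℕ} (M : Matrix (Fin k) (Fin n) R)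
    (B : Matrix (Fin n) (Fin n) R) : snfMinorsIdeal t (M * B) ≤ snfMinorsIdeal t M := by
  have h1 : snfMinorsIdeal t (M * B) = snfMinorsIdeal t (Bᵀ * Mᵀ) := by
    rw [← Matrix.transpose_mul, snfMinorsIdeal_transpose]
  rw [h1]
  exact (snfMinorsIdeal_mul_left_le Bᵀ Mᵀ).trans
    (le_of_eq (snfMinorsIdeal_transpose M))

lemma snfMinorsIdeal_invariant {k n t : ℕ} (M : Matrix (Fin k) (Fin n) R)
    (A : Matrix (Fin k) (Fin k) R) (B : Matrix (Fin n) (Fin n) R)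
    (hA : IsUnit A.det) (hB : IsUnit B.det) :
    snfMinorsIdeal t (A * M * B) = snfMinorsIdeal t M := by
  refine le_antisymm
    ((snfMinorsIdeal_mul_right_le (A * M) B).trans (snfMinorsIdeal_mul_left_le A M)) ?_
  have hM : M = A⁻¹ * (A * M * B) * B⁻¹ := by
    rw [← Matrix.mul_assoc, ← Matrix.mul_assoc, Matrix.nonsing_inv_mul A hA,
      Matrix.one_mul, Matrix.mul_assoc M B B⁻¹, Matrix.mul_nonsing_inv B hB,
      Matrix.mul_one]
  calc snfMinorsIdeal t M = snfMinorsIdeal t (A⁻¹ * (A * M * B) * B⁻¹) := by rw [← hM]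
    _ ≤ snfMinorsIdeal t (A⁻¹ * (A * M * B)) := snfMinorsIdeal_mul_right_le _ _
    _ ≤ snfMinorsIdeal t (A * M * B) := snfMinorsIdeal_mul_left_le _ _

lemma snfMinorsIdeal_diag {k n : ℕ} (S : Matrix (Fin k) (Fin n) R)
    (hdiag : ∀ (i : Fin k) (j : Fin n), (i : ℕ) ≠ (j : ℕ) → S i j = 0)
    (d : ℕ → R) (hd : ∀ i (hik : i < k) (hin : i < n), d i = S ⟨i, hik⟩ ⟨i, hin⟩)
    (hchain : ∀ i, d i ∣ d (i + 1))
    (t : ℕ) (htk : t ≤ k) (htn : t ≤ n) :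
    snfMinorsIdeal t S = Ideal.span {∏ j : Fin t, d j} := by
  have hsub : S.submatrix (Fin.castLE htk) (Fin.castLE htn)
      = Matrix.diagonal (fun j : Fin t => d (j : ℕ)) := by
    ext i j
    by_cases hij : i = j
    · subst hij
      rw [Matrix.diagonal_apply_eq, Matrix.submatrix_apply, hd i (lt_of_lt_of_le i.isLt htk)
        (lt_of_lt_of_le i.isLt htn)]
      rfl
    · rw [Matrix.diagonal_apply_ne _ hij, Matrix.submatrix_apply]
      exact hdiag _ _ (by simpa [Fin.ext_iff] using hij)
  refine le_antisymm ?_ ?_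
  · rw [snfMinorsIdeal, Ideal.span_le]
    rintro x ⟨⟨r, c⟩, rfl⟩
    exact Ideal.mem_span_singleton.mpr (snf_minor_dvd S hdiag d hd hchain t r c)
  · rw [Ideal.span_le, Set.singleton_subset_iff]
    have : (∏ j : Fin t, d (j : ℕ))
        = (S.submatrix (Fin.castLE htk) (Fin.castLE htn)).det := by
      rw [hsub, Matrix.det_diagonal]
    rw [this]
    exact Ideal.subset_span ⟨(Fin.castLE htk, Fin.castLE htn), rfl⟩

end SNFAux

/-- **Smith normal form, uniqueness up to units.** Over a PID `R`, if
`S = A * M * B` and `S' = A' * M * B'` are two diagonal forms of a `k × n` matrix `M`,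
with `A, A', B, B'` invertible and with each diagonal entry dividing the next, then
each diagonal entry of `S'` equals the corresponding diagonal entry of `S` times a unit. -/
theorem smith_normal_form_unique {R : Type*} [CommRing R] [IsDomain R]
    [IsPrincipalIdealRing R] {k n : ℕ} (M : Matrix (Fin k) (Fin n) R)
    (A A' : Matrix (Fin k) (Fin k) R) (B B' : Matrix (Fin n) (Fin n) R)
    (hA : IsUnit A.det) (hA' : IsUnit A'.det) (hB : IsUnit B.det) (hB' : IsUnit B'.det)
    (hdiag : ∀ (i : Fin k) (j : Fin n), (i : ℕ) ≠ (j : ℕ) → (A * M * B) i j = 0)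
    (hdiag' : ∀ (i : Fin k) (j : Fin n), (i : ℕ) ≠ (j : ℕ) → (A' * M * B') i j = 0)
    (hdvd : ∀ i : ℕ, ∀ (hik : i < k) (hin : i < n) (hik' : i + 1 < k) (hin' : i + 1 < n),
      (A * M * B) ⟨i, hik⟩ ⟨i, hin⟩ ∣ (A * M * B) ⟨i + 1, hik'⟩ ⟨i + 1, hin'⟩)
    (hdvd' : ∀ i : ℕ, ∀ (hik : i < k) (hin : i < n) (hik' : i + 1 < k) (hin' : i + 1 < n),
      (A' * M * B') ⟨i, hik⟩ ⟨i, hin⟩ ∣ (A' * M * B') ⟨i + 1, hik'⟩ ⟨i + 1, hin'⟩) :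
    ∀ i : ℕ, ∀ (hik : i < k) (hin : i < n),
      ∃ u : Rˣ, (A' * M * B') ⟨i, hik⟩ ⟨i, hin⟩ = u * (A * M * B) ⟨i, hik⟩ ⟨i, hin⟩ := by
  classical
  set S := A * M * B with hS
  set S' := A' * M * B' with hS'
  set d : ℕ → R := fun i => if h : i < k ∧ i < n then S ⟨i, h.1⟩ ⟨i, h.2⟩ else 0 with hdDef
  set d' : ℕ → R := fun i => if h : i < k ∧ i < n then S' ⟨i, h.1⟩ ⟨i, h.2⟩ else 0 with hd'Def
  have hd : ∀ i (hik : i < k) (hin : i < n), d i = S ⟨i, hik⟩ ⟨i, hin⟩ :=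
    fun i hik hin => dif_pos ⟨hik, hin⟩
  have hd' : ∀ i (hik : i < k) (hin : i < n), d' i = S' ⟨i, hik⟩ ⟨i, hin⟩ :=
    fun i hik hin => dif_pos ⟨hik, hin⟩
  have hchain : ∀ i, d i ∣ d (i + 1) := by
    intro i
    by_cases h : i + 1 < k ∧ i + 1 < n
    · have hik : i < k := Nat.lt_of_succ_lt h.1
      have hin : i < n := Nat.lt_of_succ_lt h.2
      rw [hd i hik hin, hd (i + 1) h.1 h.2]
      exact hdvd i hik hin h.1 h.2
    · rw [show d (i + 1) = 0 from dif_neg h]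
      exact dvd_zero _
  have hchain' : ∀ i, d' i ∣ d' (i + 1) := by
    intro i
    by_cases h : i + 1 < k ∧ i + 1 < n
    · have hik : i < k := Nat.lt_of_succ_lt h.1
      have hin : i < n := Nat.lt_of_succ_lt h.2
      rw [hd' i hik hin, hd' (i + 1) h.1 h.2]
      exact hdvd' i hik hin h.1 h.2
    · rw [show d' (i + 1) = 0 from dif_neg h]
      exact dvd_zero _
  have key : ∀ t, t ≤ k → t ≤ n →
      Associated (∏ j : Fin t, d j) (∏ j : Fin t, d' j) := by
    intro t htk htn
    have h1 := snfMinorsIdeal_diag S hdiag d hd hchain t htk htn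
    have h2 := snfMinorsIdeal_diag S' hdiag' d' hd' hchain' t htk htn
    have h3 : snfMinorsIdeal t S = snfMinorsIdeal t S' := by
      rw [hS, hS', snfMinorsIdeal_invariant M A B hA hB,
        snfMinorsIdeal_invariant M A' B' hA' hB']
    exact Ideal.span_singleton_eq_span_singleton.mp (h1.symm.trans (h3.trans h2))
  intro i hik hin
  have hPi := key i hik.le hin.le
  have hPsucc := key (i + 1) hik hin
  have hsplit : ∏ j : Fin (i + 1), d j = (∏ j : Fin i, d j) * d i := by
    rw [Fin.prod_univ_castSucc]
    simp
  have hsplit' : ∏ j : Fin (i + 1), d' j = (∏ j : Fin i, d' j) * d' i := by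
    rw [Fin.prod_univ_castSucc]
    simp
  by_cases h0 : (∏ j : Fin i, d j) = 0
  · have hdi : d i = 0 := by
      obtain ⟨j, _, hj⟩ := Finset.prod_eq_zero_iff.mp h0
      exact zero_dvd_iff.mp (hj ▸ snf_dvd_chain hchain j.isLt.le)
    have h0' : (∏ j : Fin i, d' j) = 0 := by
      obtain ⟨u, hu⟩ := hPi
      rw [← hu, h0, zero_mul]
    have hdi' : d' i = 0 := by
      obtain ⟨j, _, hj⟩ := Finset.prod_eq_zero_iff.mp h0'
      exact zero_dvd_iff.mp (hj ▸ snf_dvd_chain hchain' j.isLt.le)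
    refine ⟨1, ?_⟩
    rw [← hd i hik hin, ← hd' i hik hin, hdi, hdi']
    simp
  · have hassoc : Associated (d i) (d' i) :=
      Associated.of_mul_left (by rw [← hsplit, ← hsplit']; exact hPsucc) hPi h0
    obtain ⟨u, hu⟩ := hassoc
    exact ⟨u, by rw [← hd i hik hin, ← hd' i hik hin, ← hu, mul_comm]⟩
end

section
/- Let R be a principal ideal domain and let A be an alternating n × n matrix over R (A is antisymmetric, Aᵀ = −A, and every diagonal entry of A is 0). Then there exists an invertible n × n matrix B over R such that S = Bᵀ * A * B is block-diagonal with 2 × 2 diagonal blocks of the form ((0, a_i), (−a_i, 0)) (possibly followed by zero blocks/rows), and a_i divides a_{i+1} for each i; that is, S_{2i,2i+1} divides S_{2i+2,2i+3} (indexing blocks from 0). -/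
open Matrix

/-!
Over a PID the strict divisibility order has no infinite descending chains, so among all
matrices congruent to `A` there is one whose pivot entry `a = M p q` is minimal for divisibility.
If `a` failed to divide some `M p k`, a unimodular `2 × 2` change of the basis vectors `q, k`
would replace `a` by `gcd (a, M p k)`, a strictly smaller pivot; by antisymmetry the same holds
for row `q`. Shears then clear rows `p` and `q`, and adding row `i` to row `p` moves any entry
`M i j` into row `p`, so `a` divides every entry. Splitting off the `2 × 2` block and recursing
gives the normal form; `a` divides the later blocks because congruence preserves divisibility
of all entries by `a`.
-/

theorem exists_isCoprime_mul_add_mul_dvd {R : Type*} [CommRing R] [IsDomain R] [IsBezout R]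
    (a b : R) : ∃ x y : R, IsCoprime x y ∧ x * a + y * b ∣ a ∧ x * a + y * b ∣ b := by
  obtain ⟨x, y, hg⟩ := IsBezout.gcd_eq_sum a b
  obtain ⟨a', ha⟩ := IsBezout.gcd_dvd_left a b
  obtain ⟨b', hb⟩ := IsBezout.gcd_dvd_right a b
  by_cases h0 : IsBezout.gcd a b = 0
  · rw [h0, zero_mul] at ha hb
    exact ⟨1, 0, isCoprime_one_left, by simp [ha, hb]⟩
  refine ⟨x, y, ⟨a', b', mul_left_cancel₀ h0 ?_⟩, ?_⟩
  · linear_combination hg - x * ha - y * hb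
  rw [hg]
  exact ⟨IsBezout.gcd_dvd_left a b, IsBezout.gcd_dvd_right a b⟩

namespace Matrix

section CommRing

variable {ι κ R : Type*} [CommRing R]

def IsAlt (A : Matrix ι ι R) : Prop := Aᵀ = -A ∧ ∀ i, A i i = 0

theorem IsAlt.apply_swap {A : Matrix ι ι R} (hA : A.IsAlt) (i j : ι) : A j i = -A i j := by
  rw [← transpose_apply A i j, hA.1, neg_apply]

theorem isAlt_sub_transpose (U : Matrix ι ι R) : (U - Uᵀ).IsAlt :=
  ⟨by rw [transpose_sub, transpose_transpose, neg_sub], fun i => by simp⟩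

theorem IsAlt.exists_eq_sub_transpose [Finite ι] {A : Matrix ι ι R} (hA : A.IsAlt) :
    ∃ U : Matrix ι ι R, A = U - Uᵀ := by
  have := Fintype.ofFinite ι
  let _ : LinearOrder ι := LinearOrder.lift' _ (Fintype.equivFin ι).injective
  refine ⟨of fun i j => if i < j then A i j else 0, ?_⟩
  ext i j
  rcases lt_trichotomy i j with h | rfl | h
  · simp [h, h.not_gt]
  · simp [hA.2]
  · simp [h, h.not_gt, hA.apply_swap j i]

theorem IsAlt.submatrix {A : Matrix ι ι R} (hA : A.IsAlt) (f : κ → ι) :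
    (A.submatrix f f).IsAlt :=
  ⟨by rw [transpose_submatrix, hA.1]; rfl, fun i => hA.2 (f i)⟩

-- In characteristic `2` antisymmetry alone does not give `vᵀ A v = 0`; writing `A = U - Uᵀ` does.
theorem IsAlt.mul_mul_transpose [Fintype ι] {A : Matrix ι ι R} (hA : A.IsAlt)
    (P : Matrix κ ι R) : (P * A * Pᵀ).IsAlt := by
  obtain ⟨U, rfl⟩ := hA.exists_eq_sub_transpose
  simpa [Matrix.mul_sub, Matrix.sub_mul, transpose_mul, Matrix.mul_assoc] using
    isAlt_sub_transpose (P * U * Pᵀ)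

theorem mul_mul_transpose_apply [Fintype ι] (P M : Matrix ι ι R) (s t : ι) :
    (P * M * Pᵀ) s t = P s ⬝ᵥ M *ᵥ P t := by
  rw [mul_mul_apply, transpose_transpose]

variable [Fintype ι] [DecidableEq ι] [Fintype κ] [DecidableEq κ]

def Congruent (A M : Matrix ι ι R) : Prop :=
  ∃ P : Matrix ι ι R, IsUnit P.det ∧ P * A * Pᵀ = M

namespace Congruent

variable {A M N : Matrix ι ι R}

theorem refl (A : Matrix ι ι R) : Congruent A A := ⟨1, by simp, by simp⟩

theorem trans (h₁ : Congruent A M) (h₂ : Congruent M N) : Congruent A N := by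
  obtain ⟨P, hP, rfl⟩ := h₁
  obtain ⟨Q, hQ, rfl⟩ := h₂
  exact ⟨Q * P, by simpa using hQ.mul hP, by simp [transpose_mul, Matrix.mul_assoc]⟩

theorem isAlt (h : Congruent A M) (hA : A.IsAlt) : M.IsAlt := by
  obtain ⟨P, -, rfl⟩ := h
  exact hA.mul_mul_transpose P

theorem submatrix (h : Congruent A M) (e : κ ≃ ι) :
    Congruent (A.submatrix e e) (M.submatrix e e) := by
  obtain ⟨P, hP, rfl⟩ := h
  refine ⟨P.submatrix e e, by rwa [det_submatrix_equiv_self], ?_⟩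
  rw [transpose_submatrix, submatrix_mul_equiv, submatrix_mul_equiv]

theorem fromBlocks {B C : Matrix κ κ R} (h₁ : Congruent A M) (h₂ : Congruent B C) :
    Congruent (fromBlocks A 0 0 B) (fromBlocks M 0 0 C) := by
  obtain ⟨P, hP, rfl⟩ := h₁
  obtain ⟨Q, hQ, rfl⟩ := h₂
  exact ⟨Matrix.fromBlocks P 0 0 Q, by simpa [det_fromBlocks_zero₂₁] using hP.mul hQ,
    by simp [fromBlocks_transpose, fromBlocks_multiply]⟩

theorem dvd_apply {a : R} (h : Congruent A M) (ha : ∀ i j, a ∣ A i j) (i j : ι) :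
    a ∣ M i j := by
  choose N hN using ha
  obtain ⟨P, -, rfl⟩ := h
  have : A = a • of N := by ext i j; exact hN i j
  rw [this, Matrix.mul_smul, Matrix.smul_mul, smul_apply, smul_eq_mul]
  exact dvd_mul_right _ _

end Congruent

def blockAt (q k : ι) (U : Matrix (Fin 2) (Fin 2) R) : Matrix ι ι R :=
  of fun s => if s = q then U 0 0 • Pi.single q 1 + U 0 1 • Pi.single k 1
    else if s = k then U 1 0 • Pi.single q 1 + U 1 1 • Pi.single k 1 else Pi.single s 1

omit [Fintype ι] in
theorem blockAt_one (q k : ι) : blockAt q k (1 : Matrix (Fin 2) (Fin 2) R) = 1 := by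
  ext s t
  by_cases hq : s = q <;> by_cases hk : s = k <;> subst_vars <;>
    simp [blockAt, one_eq_pi_single, *]

theorem blockAt_mul {q k : ι} (hqk : q ≠ k) (U V : Matrix (Fin 2) (Fin 2) R) :
    blockAt q k U * blockAt q k V = blockAt q k (U * V) := by
  ext s t
  by_cases hq : s = q <;> by_cases hk : s = k <;> subst_vars <;>
    simp [blockAt, mul_apply, Pi.single_apply, add_mul, Finset.sum_add_distrib, Fin.sum_univ_two,
      hqk.symm, *] <;>
    split_ifs <;> simp_all

theorem isUnit_det_blockAt {q k : ι} (hqk : q ≠ k) {U : Matrix (Fin 2) (Fin 2) R}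
    (hU : IsUnit U.det) : IsUnit (blockAt q k U).det :=
  isUnit_det_of_right_inverse (B := blockAt q k U⁻¹) <| by
    rw [blockAt_mul hqk, mul_nonsing_inv U hU, blockAt_one]

theorem blockAt_mul_mul_transpose_apply {p q k : ι} (hpq : p ≠ q) (hpk : p ≠ k)
    (U : Matrix (Fin 2) (Fin 2) R) (M : Matrix ι ι R) :
    (blockAt q k U * M * (blockAt q k U)ᵀ) p q = U 0 0 * M p q + U 0 1 * M p k := by
  have hp : blockAt q k U p = Pi.single p 1 := (if_neg hpq).trans (if_neg hpk)
  have hq : blockAt q k U q = U 0 0 • Pi.single q 1 + U 0 1 • Pi.single k 1 := if_pos rfl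
  rw [mul_mul_transpose_apply, hp, hq]
  simp [mulVec_add, mulVec_smul]

def shear (p : ι) (u : ι → R) : Matrix ι ι R := 1 + vecMulVec u (Pi.single p 1)

theorem det_shear {p : ι} {u : ι → R} (hu : u p = 0) : (shear p u).det = 1 := by
  rw [shear, vecMulVec_eq Unit, det_one_add_replicateCol_mul_replicateRow]
  simp [hu]

theorem shear_mul_mul_transpose_apply {M : Matrix ι ι R} {p : ι} (hM : M p p = 0) (u : ι → R)
    (s t : ι) :
    (shear p u * M * (shear p u)ᵀ) s t = M s t + u s * M p t + u t * M s p := by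
  simp [shear, Matrix.add_mul, Matrix.mul_add, vecMulVec_mul, mul_vecMulVec, vecMulVec_apply, hM]
  ring

theorem exists_congruent_clear_row {M : Matrix ι ι R} {p q : ι} (hqq : M q q = 0)
    (hdvd : ∀ k, M p q ∣ M p k) :
    ∃ M', Congruent M M' ∧ M' p q = M p q ∧ (∀ k, k ≠ p → k ≠ q → M' p k = 0) ∧
      ∀ k, M' q k = M q k := by
  choose c hc using hdvd
  set u : ι → R := fun k => if k = p ∨ k = q then 0 else -c k with hu
  have hup : u p = 0 := by simp [hu]
  have huq : u q = 0 := by simp [hu]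
  refine ⟨_, ⟨shear q u, by rw [det_shear huq]; exact isUnit_one, rfl⟩, ?_, ?_, ?_⟩ <;>
    simp only [shear_mul_mul_transpose_apply hqq, hup, huq, hqq]
  · ring
  · intro k hkp hkq
    simp [hu, hkp, hkq, hc k]
    ring
  · intro k
    ring

theorem IsAlt.exists_congruent_clear_rows {M : Matrix ι ι R} {p q : ι} (hM : M.IsAlt)
    (hp : ∀ k, M p q ∣ M p k) (hq : ∀ k, M p q ∣ M q k) :
    ∃ M', Congruent M M' ∧ M' p q = M p q ∧ ∀ k, k ≠ p → k ≠ q → M' p k = 0 ∧ M' q k = 0 := by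
  obtain ⟨M₁, hM₁, h₁pq, h₁p, h₁q⟩ := exists_congruent_clear_row (hM.2 q) hp
  have hM₁alt := hM₁.isAlt hM
  obtain ⟨M₂, hM₂, h₂qp, h₂q, h₂p⟩ := exists_congruent_clear_row (p := q) (hM₁alt.2 p)
    fun k => by
      rw [hM₁alt.apply_swap p q, h₁pq, neg_dvd, h₁q]
      exact hq k
  refine ⟨M₂, hM₁.trans hM₂, ?_, fun k hkp hkq => ⟨by rw [h₂p, h₁p k hkp hkq], h₂q k hkq hkp⟩⟩
  rw [(hM₂.isAlt hM₁alt).apply_swap q p, h₂qp, hM₁alt.apply_swap p q, neg_neg, h₁pq]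

theorem IsAlt.exists_congruent_add_row {M : Matrix ι ι R} {p q i : ι} (hM : M.IsAlt)
    (hpq : p ≠ q) (hip : i ≠ p) (hpi : M p i = 0) (hqi : M q i = 0) :
    ∃ M', Congruent M M' ∧ M' p q = M p q ∧ ∀ j, M' p j = M p j + M i j := by
  have hu : (Pi.single p 1 : ι → R) i = 0 := by simp [hip]
  refine ⟨_, ⟨shear i (Pi.single p 1), by rw [det_shear hu]; exact isUnit_one, rfl⟩, ?_,
    fun j => ?_⟩ <;> rw [shear_mul_mul_transpose_apply (hM.2 i)]
  · simp [Pi.single_eq_of_ne hpq.symm, hM.apply_swap q i, hqi]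
  · simp [hpi]

end CommRing

section PID

variable {ι R : Type*} [Fintype ι] [DecidableEq ι] [CommRing R] [IsDomain R]
  [IsPrincipalIdealRing R]

theorem exists_congruent_dvd_not_dvd {M : Matrix ι ι R} {p q k : ι} (hpq : p ≠ q) (hpk : p ≠ k)
    (h : ¬M p q ∣ M p k) : ∃ M', Congruent M M' ∧ M' p q ∣ M p q ∧ ¬M p q ∣ M' p q := by
  have hqk : q ≠ k := by rintro rfl; exact h dvd_rfl
  obtain ⟨x, y, ⟨u, v, huv⟩, hga, hgb⟩ := exists_isCoprime_mul_add_mul_dvd (M p q) (M p k)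
  refine ⟨_, ⟨blockAt q k !![x, y; -v, u], isUnit_det_blockAt hqk ?_, rfl⟩, ?_⟩
  · rw [det_fin_two_of]
    exact isUnit_iff_exists_inv.mpr ⟨1, by linear_combination huv⟩
  rw [blockAt_mul_mul_transpose_apply hpq hpk]
  exact ⟨hga, fun hdvd => h (hdvd.trans hgb)⟩

theorem exists_congruent_minimal (A : Matrix ι ι R) (p q : ι) :
    ∃ M, Congruent A M ∧ ∀ M', Congruent A M' → M' p q ∣ M p q → M p q ∣ M' p q := by
  obtain ⟨M, hM, hmin⟩ := (InvImage.wf (fun M : Matrix ι ι R => M p q)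
    wellFounded_dvdNotUnit).has_min {M | Congruent A M} ⟨A, .refl A⟩
  exact ⟨M, hM, fun M' hM' hdvd =>
    by_contra fun h => hmin M' hM' (dvdNotUnit_of_dvd_of_not_dvd hdvd h)⟩

variable {A M : Matrix ι ι R} {p q : ι}

theorem IsAlt.dvd_row_of_minimal (hA : A.IsAlt) (hpq : p ≠ q)
    (hmin : ∀ M', Congruent A M' → M' p q ∣ M p q → M p q ∣ M' p q) (hM : Congruent A M)
    (k : ι) : M p q ∣ M p k ∧ M p q ∣ M q k := by
  have hMalt := hM.isAlt hA
  constructor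
  · by_contra h
    have hpk : p ≠ k := by rintro rfl; exact h (by simp [hMalt.2])
    obtain ⟨M', hM', h₁, h₂⟩ := exists_congruent_dvd_not_dvd hpq hpk h
    exact h₂ (hmin M' (hM.trans hM') h₁)
  · by_contra h
    rw [← neg_dvd, ← hMalt.apply_swap] at h
    have hqk : q ≠ k := by rintro rfl; exact h (by simp [hMalt.2])
    obtain ⟨M', hM', h₁, h₂⟩ := exists_congruent_dvd_not_dvd hpq.symm hqk h
    have hM'alt := (hM.trans hM').isAlt hA
    rw [hMalt.apply_swap, hM'alt.apply_swap, neg_dvd, dvd_neg] at h₁ h₂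
    exact h₂ (hmin M' (hM.trans hM') h₁)

theorem IsAlt.exists_congruent_pivot (hA : A.IsAlt) (hpq : p ≠ q) :
    ∃ M, Congruent A M ∧ (∀ k, k ≠ p → k ≠ q → M p k = 0 ∧ M q k = 0) ∧
      ∀ i j, M p q ∣ M i j := by
  obtain ⟨M, hAM, hmin⟩ := exists_congruent_minimal A p q
  -- every matrix congruent to `A` with the same pivot is again minimal
  have hrows : ∀ N, Congruent A N → N p q = M p q → ∀ k, M p q ∣ N p k ∧ M p q ∣ N q k := by
    intro N hN hNpq
    rw [← hNpq]
    exact hA.dvd_row_of_minimal hpq (by rwa [hNpq]) hN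
  obtain ⟨N, hMN, hNpq, hzero⟩ := (hAM.isAlt hA).exists_congruent_clear_rows
    (fun k => (hrows M hAM rfl k).1) (fun k => (hrows M hAM rfl k).2)
  have hAN := hAM.trans hMN
  refine ⟨N, hAN, hzero, fun i j => ?_⟩
  rw [hNpq]
  by_cases hip : i = p
  · exact hip ▸ (hrows N hAN hNpq j).1
  by_cases hiq : i = q
  · exact hiq ▸ (hrows N hAN hNpq j).2
  obtain ⟨N', hNN', hN'pq, hN'p⟩ := (hAN.isAlt hA).exists_congruent_add_row hpq hip
    (hzero i hip hiq).1 (hzero i hip hiq).2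
  have := (hrows N' (hAN.trans hNN') (hN'pq.trans hNpq) j).1
  rwa [hN'p, dvd_add_right (hrows N hAN hNpq j).1] at this

end PID

section Fin

variable {R : Type*} [CommRing R]

def finTwoSumEquiv (m : ℕ) : Fin 2 ⊕ Fin m ≃ Fin (m + 2) :=
  finSumFinEquiv.trans (finCongr (Nat.add_comm 2 m))

@[simp] theorem finTwoSumEquiv_inl_val {m : ℕ} (i : Fin 2) :
    (finTwoSumEquiv m (.inl i) : ℕ) = i := by
  simp [finTwoSumEquiv]

@[simp] theorem finTwoSumEquiv_inr_val {m : ℕ} (j : Fin m) :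
    (finTwoSumEquiv m (.inr j) : ℕ) = j + 2 := by
  simp [finTwoSumEquiv]

def IsAltSmithForm {n : ℕ} (S : Matrix (Fin n) (Fin n) R) : Prop :=
  (∀ i j : Fin n, S i j ≠ 0 → (i : ℕ) / 2 = (j : ℕ) / 2 ∧ (i : ℕ) ≠ j) ∧
    ∀ t (h0 : 2 * t < n) (h1 : 2 * t + 1 < n) (h2 : 2 * t + 2 < n) (h3 : 2 * t + 3 < n),
      S ⟨2 * t, h0⟩ ⟨2 * t + 1, h1⟩ ∣ S ⟨2 * t + 2, h2⟩ ⟨2 * t + 3, h3⟩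

theorem isAltSmithForm_of_le_one {n : ℕ} (hn : n ≤ 1) {S : Matrix (Fin n) (Fin n) R}
    (hS : ∀ i, S i i = 0) : IsAltSmithForm S := by
  refine ⟨fun i j hij => ?_, fun t _ _ _ h3 => by omega⟩
  obtain rfl : i = j := Fin.ext (by omega)
  exact absurd (hS i) hij

theorem isAltSmithForm_reindex_fromBlocks {m : ℕ} {T : Matrix (Fin 2) (Fin 2) R}
    (hT : ∀ i, T i i = 0) {S : Matrix (Fin m) (Fin m) R} (hS : IsAltSmithForm S)
    (hdvd : ∀ i j, T 0 1 ∣ S i j) :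
    IsAltSmithForm (reindex (finTwoSumEquiv m) (finTwoSumEquiv m) (fromBlocks T 0 0 S)) := by
  have he (i : Fin (m + 2)) :
      (∃ a, i = finTwoSumEquiv m (.inl a)) ∨ ∃ b, i = finTwoSumEquiv m (.inr b) := by
    rcases h : (finTwoSumEquiv m).symm i with a | b
    exacts [.inl ⟨a, by rw [← h, Equiv.apply_symm_apply]⟩,
      .inr ⟨b, by rw [← h, Equiv.apply_symm_apply]⟩]
  have hinl (k : ℕ) (hk : k < 2) :
      (⟨k, by omega⟩ : Fin (m + 2)) = finTwoSumEquiv m (.inl ⟨k, hk⟩) :=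
    Fin.ext (by simp)
  have hinr (k : ℕ) (hk : k < m) {l : ℕ} (hl : l < m + 2) (hkl : l = k + 2) :
      (⟨l, hl⟩ : Fin (m + 2)) = finTwoSumEquiv m (.inr ⟨k, hk⟩) :=
    Fin.ext (by simp [hkl])
  constructor
  · intro i j hij
    rcases he i with ⟨a, rfl⟩ | ⟨a, rfl⟩ <;> rcases he j with ⟨b, rfl⟩ | ⟨b, rfl⟩ <;>
      simp only [reindex_apply, submatrix_apply, Equiv.symm_apply_apply, fromBlocks_apply₁₁,
        fromBlocks_apply₁₂, fromBlocks_apply₂₁, fromBlocks_apply₂₂, Matrix.zero_apply,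
        ne_eq, not_true_eq_false] at hij ⊢
    · have hab : a ≠ b := by rintro rfl; exact hij (hT a)
      simp only [finTwoSumEquiv_inl_val]
      omega
    · have := hS.1 a b hij
      simp only [finTwoSumEquiv_inr_val]
      omega
  · rintro (_ | t) h0 h1 h2 h3
    · rw [hinl 0 (by omega), hinl 1 (by omega), hinr 0 (by omega) h2 rfl,
        hinr 1 (by omega) h3 rfl]
      simpa using hdvd _ _
    · rw [hinr (2 * t) (by omega) h0 (by ring), hinr (2 * t + 1) (by omega) h1 (by ring),
        hinr (2 * t + 2) (by omega) h2 (by ring), hinr (2 * t + 3) (by omega) h3 (by ring)]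
      simpa using hS.2 t (by omega) (by omega) (by omega) (by omega)

theorem IsAlt.exists_congruent_isAltSmithForm [IsDomain R] [IsPrincipalIdealRing R] :
    ∀ {n : ℕ} {A : Matrix (Fin n) (Fin n) R}, A.IsAlt → ∃ S, Congruent A S ∧ IsAltSmithForm S
  | 0, A, hA | 1, A, hA => ⟨A, .refl A, isAltSmithForm_of_le_one (by omega) hA.2⟩
  | m + 2, A, hA => by
    let e := finTwoSumEquiv m
    obtain ⟨M, hAM, hzero, hdvd⟩ :=
      (hA.submatrix e).exists_congruent_pivot (p := .inl 0) (q := .inl 1) (by simp)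
    have hMalt := hAM.isAlt (hA.submatrix e)
    obtain ⟨S, hS, hSform⟩ :=
      IsAlt.exists_congruent_isAltSmithForm (A := M.toBlocks₂₂) (hMalt.submatrix Sum.inr)
    have h₁₂ : M.toBlocks₁₂ = 0 := by
      ext a b
      fin_cases a
      exacts [(hzero (.inr b) (by simp) (by simp)).1, (hzero (.inr b) (by simp) (by simp)).2]
    have h₂₁ : M.toBlocks₂₁ = 0 := by
      ext a b
      simpa [toBlocks₁₂, toBlocks₂₁, hMalt.apply_swap (.inl b)] using congrFun (congrFun h₁₂ b) a
    have hMS : Congruent M (fromBlocks M.toBlocks₁₁ 0 0 S) := by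
      conv_lhs => rw [← fromBlocks_toBlocks M, h₁₂, h₂₁]
      exact (Congruent.refl _).fromBlocks hS
    refine ⟨reindex e e (fromBlocks M.toBlocks₁₁ 0 0 S), ?_,
      isAltSmithForm_reindex_fromBlocks (fun i => hMalt.2 _) hSform
        (hS.dvd_apply fun i j => hdvd _ _)⟩
    have h := (hAM.trans hMS).submatrix e.symm
    rwa [submatrix_submatrix, Equiv.self_comp_symm, submatrix_id_id, ← reindex_apply] at h

end Fin

end Matrix

/-- **Alternating Smith normal form.** Over a PID `R`, an alternating `n × n` matrix `A`
(`Aᵀ = -A` with zero diagonal) can be transformed by a symmetric change of basis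
`S = Bᵀ * A * B`, with `B` invertible, into a block-diagonal matrix with `2 × 2` blocks
`((0, aᵢ), (-aᵢ, 0))` (possibly followed by zero blocks/rows), where `aᵢ ∣ aᵢ₊₁`:
the only possibly nonzero entries of `S` are at positions `(2t, 2t+1)` and `(2t+1, 2t)`,
`S (2t+1) (2t) = - S (2t) (2t+1)`, and `S (2t) (2t+1) ∣ S (2t+2) (2t+3)`. -/
theorem alternating_smith_normal_form {R : Type*} [CommRing R] [IsDomain R]
    [IsPrincipalIdealRing R] {n : ℕ} (A : Matrix (Fin n) (Fin n) R)
    (hanti : Aᵀ = -A) (hdiag : ∀ i, A i i = 0) :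
    ∃ B : Matrix (Fin n) (Fin n) R, IsUnit B.det ∧
      (∀ i j : Fin n, (Bᵀ * A * B) i j ≠ 0 →
        ((i : ℕ) / 2 = (j : ℕ) / 2 ∧ (i : ℕ) ≠ (j : ℕ))) ∧
      (∀ t : ℕ, ∀ (h0 : 2 * t < n) (h1 : 2 * t + 1 < n),
        (Bᵀ * A * B) ⟨2 * t + 1, h1⟩ ⟨2 * t, h0⟩ =
          - (Bᵀ * A * B) ⟨2 * t, h0⟩ ⟨2 * t + 1, h1⟩) ∧
      (∀ t : ℕ, ∀ (h0 : 2 * t < n) (h1 : 2 * t + 1 < n)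
        (h2 : 2 * t + 2 < n) (h3 : 2 * t + 3 < n),
        (Bᵀ * A * B) ⟨2 * t, h0⟩ ⟨2 * t + 1, h1⟩ ∣
          (Bᵀ * A * B) ⟨2 * t + 2, h2⟩ ⟨2 * t + 3, h3⟩) := by
  have hA : A.IsAlt := ⟨hanti, hdiag⟩
  obtain ⟨S, ⟨P, hP, rfl⟩, hS⟩ := hA.exists_congruent_isAltSmithForm
  refine ⟨Pᵀ, by rwa [det_transpose], ?_⟩
  rw [transpose_transpose]
  exact ⟨hS.1, fun t _ _ => (hA.mul_mul_transpose P).apply_swap _ _, hS.2⟩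
end

section
/- (Lindström; Gessel–Viennot) Let R be a commutative ring, let V be a finite set of vertices, and let w : V × V → R be a weight function (w(u,v) is interpreted as the total weight of edges from u to v) such that the relation u → v defined by w(u,v) ≠ 0 is acyclic (its transitive closure is irreflexive). A path from u to v is a finite sequence u = v_0 → v_1 → ⋯ → v_m = v with w(v_{j}, v_{j+1}) ≠ 0 for each j, and its weight is the product ∏_j w(v_j, v_{j+1}). Fix distinct left endpoints a_1, …, a_n ∈ V and distinct right endpoints b_1, …, b_n ∈ V, and define the n × n matrix V over R by V_{i,j} = sum of the weights of all paths from a_i to b_j (a finite sum, by acyclicity). Then det V = Σ_{(σ, ℓ)} sign(σ) · w(ℓ), where the sum ranges over all pairs of a permutation σ of {1,…,n} and an n-tuple ℓ = (ℓ_1, …, ℓ_n) of pairwise vertex-disjoint paths with ℓ_i a path from a_i to b_{σ(i)}, and w(ℓ) is the product of the weights of the paths ℓ_i. -/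
/-!
Expanding `det Vmat` by the Leibniz formula and multiplying out, it becomes the signed sum of the
weights of all pairs `(σ, ℓ)` of a permutation and a tuple of paths `ℓ i` from `a i` to
`b (σ i)`. On the pairs whose paths are not vertex-disjoint, let `ℓ i` be the first path that
meets another one, `x` the first vertex of `ℓ i` lying on another path, and `ℓ j` the first other
path through `x`, and exchange the tails of `ℓ i` and `ℓ j` after `x`. This keeps the weight,
multiplies `σ` by a transposition and, since acyclicity makes every path simple, does not change
`(i, x, j)`; so it is a sign-reversing involution and these pairs cancel.
-/

open Matrix

/-- `p` is a path from `u` to `v` in the directed graph on `V` whose edge weights are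
given by `w` (an edge `x → y` is present iff `w x y ≠ 0`). -/
def IsGVPath {V : Type*} {R : Type*} [CommRing R] (w : V → V → R) (u v : V)
    (p : List V) : Prop :=
  p.head? = some u ∧ p.getLast? = some v ∧ p.Chain' (fun x y => w x y ≠ 0)

/-- The weight of a path: the product of the weights of its edges. -/
def gvWeight {V : Type*} {R : Type*} [CommRing R] (w : V → V → R) (p : List V) : R :=
  ((p.zip p.tail).map fun q => w q.1 q.2).prod

namespace LGV

variable {V R ι : Type*} [CommRing R]

section Paths

@[simp]
lemma gvWeight_singleton (w : V → V → R) (x : V) : gvWeight w [x] = 1 := by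
  simp [gvWeight]

@[simp]
lemma gvWeight_cons_cons (w : V → V → R) (x y : V) (p : List V) :
    gvWeight w (x :: y :: p) = w x y * gvWeight w (y :: p) := by
  simp [gvWeight]

lemma gvWeight_append_cons (w : V → V → R) (p : List V) (x : V) (q : List V) :
    gvWeight w (p ++ x :: q) = gvWeight w (p ++ [x]) * gvWeight w (x :: q) := by
  induction p with
  | nil => simp
  | cons u p ih =>
    cases p with
    | nil => simp
    | cons v p =>
      simp only [List.cons_append, gvWeight_cons_cons] at ih ⊢
      rw [ih, mul_assoc]

lemma IsGVPath.nodup {w : V → V → R}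
    (hacyc : Irreflexive (Relation.TransGen fun u v => w u v ≠ 0)) {u v : V} {p : List V}
    (hp : IsGVPath w u v p) : p.Nodup := by
  have : Trans (Relation.TransGen fun u v => w u v ≠ 0) (Relation.TransGen fun u v => w u v ≠ 0)
      (Relation.TransGen fun u v => w u v ≠ 0) := ⟨.trans⟩
  have hpath : List.Pairwise (Relation.TransGen fun u v => w u v ≠ 0) p :=
    List.isChain_iff_pairwise.mp (hp.2.2.imp fun _ _ => .single)
  exact hpath.imp fun {a _} h => by rintro rfl; exact hacyc a h

lemma finite_setOf_isGVPath [Finite V] {w : V → V → R}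
    (hacyc : Irreflexive (Relation.TransGen fun u v => w u v ≠ 0)) (u v : V) :
    {p | IsGVPath w u v p}.Finite :=
  have := Fintype.ofFinite V
  (List.finite_length_le V (Fintype.card V)).subset fun _ hp =>
    (IsGVPath.nodup hacyc hp).length_le_card

lemma IsGVPath.append_cons {w : V → V → R} {u v u' v' x : V} {p s q t : List V}
    (hp : IsGVPath w u v (p ++ x :: s)) (hq : IsGVPath w u' v' (q ++ x :: t)) :
    IsGVPath w u v' (p ++ x :: t) := by
  obtain ⟨hpu, -, hpc⟩ := hp
  obtain ⟨-, hqv, hqc⟩ := hq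
  refine ⟨by simpa [List.head?_append] using hpu, by simpa [List.getLast?_append] using hqv, ?_⟩
  exact List.isChain_split.mpr ⟨(List.isChain_split.mp hpc).1, (List.isChain_split.mp hqc).2⟩

end Paths

section Splice

variable [DecidableEq V]

lemma ne_of_mem_takeWhile_ne {x v : V} {q : List V} (hv : v ∈ q.takeWhile (· ≠ x)) : v ≠ x :=
  of_decide_eq_true (List.mem_takeWhile_imp (p := fun v => decide (v ≠ x)) hv)

lemma mem_takeWhile_ne_or {x y : V} {l : List V} (hx : x ∈ l) (hy : y ∈ l) (hxy : x ≠ y) :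
    y ∈ l.takeWhile (· ≠ x) ∨ x ∈ l.takeWhile (· ≠ y) := by
  induction l with
  | nil => simp at hx
  | cons a l ih =>
    rcases eq_or_ne a x with rfl | hax
    · right
      rw [List.takeWhile_cons_of_pos (by simpa using hxy)]
      exact List.mem_cons_self
    rcases eq_or_ne a y with rfl | hay
    · left
      rw [List.takeWhile_cons_of_pos (by simpa using hax)]
      exact List.mem_cons_self
    rw [List.takeWhile_cons_of_pos (by simpa using hax),
      List.takeWhile_cons_of_pos (by simpa using hay)]
    exact (ih ((List.mem_cons.mp hx).resolve_left hax.symm)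
      ((List.mem_cons.mp hy).resolve_left hay.symm)).imp (List.mem_cons_of_mem a)
        (List.mem_cons_of_mem a)

lemma exists_mem_forall_mem_takeWhile_not {P : V → Prop} {l : List V} (h : ∃ v ∈ l, P v) :
    ∃ x ∈ l, P x ∧ ∀ v ∈ l.takeWhile (· ≠ x), ¬ P v := by
  induction l with
  | nil => simp at h
  | cons a l ih =>
    by_cases ha : P a
    · exact ⟨a, List.mem_cons_self, ha, by simp⟩
    obtain ⟨v, hv, hPv⟩ := h
    have hvl : v ∈ l := (List.mem_cons.mp hv).resolve_left (by rintro rfl; exact ha hPv)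
    obtain ⟨x, hx, hPx, hfirst⟩ := ih ⟨v, hvl, hPv⟩
    have hax : a ≠ x := by rintro rfl; exact ha hPx
    refine ⟨x, List.mem_cons_of_mem a hx, hPx, ?_⟩
    rw [List.takeWhile_cons_of_pos (by simpa using hax)]
    rintro u (_ | ⟨_, hu⟩)
    exacts [ha, hfirst u hu]

lemma dropWhile_ne_eq_cons {x : V} {q : List V} (hx : x ∈ q) :
    q.dropWhile (· ≠ x) = x :: (q.dropWhile (· ≠ x)).tail := by
  induction q with
  | nil => simp at hx
  | cons v q ih =>
    by_cases hv : v = x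
    · simp [hv]
    · rw [List.dropWhile_cons_of_pos (by simpa using hv)]
      exact ih ((List.mem_cons.mp hx).resolve_left (Ne.symm hv))

lemma eq_takeWhile_append_cons {x : V} {q : List V} (hx : x ∈ q) :
    q = q.takeWhile (· ≠ x) ++ x :: (q.dropWhile (· ≠ x)).tail := by
  rw [← dropWhile_ne_eq_cons hx, List.takeWhile_append_dropWhile]

lemma takeWhile_ne_dropWhile_ne (x : V) (q : List V) :
    (q.dropWhile (· ≠ x)).takeWhile (· ≠ x) = [] := by
  by_cases hx : x ∈ q
  · rw [dropWhile_ne_eq_cons hx]; simp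
  · rw [List.dropWhile_eq_nil_iff.mpr (by grind)]; rfl

def splice (x : V) (p q : List V) : List V :=
  p.takeWhile (· ≠ x) ++ q.dropWhile (· ≠ x)

@[simp]
lemma takeWhile_splice (x : V) (p q : List V) :
    (splice x p q).takeWhile (· ≠ x) = p.takeWhile (· ≠ x) := by
  rw [splice, List.takeWhile_append_of_pos fun _ h => decide_eq_true (ne_of_mem_takeWhile_ne h),
    takeWhile_ne_dropWhile_ne, List.append_nil]

@[simp]
lemma dropWhile_splice (x : V) (p q : List V) :
    (splice x p q).dropWhile (· ≠ x) = q.dropWhile (· ≠ x) := by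
  rw [splice, List.dropWhile_append_of_pos fun _ h => decide_eq_true (ne_of_mem_takeWhile_ne h),
    List.dropWhile_idempotent]

@[simp]
lemma splice_splice_splice (x : V) (p q r s : List V) :
    splice x (splice x p q) (splice x r s) = splice x p s := by
  rw [splice, takeWhile_splice, dropWhile_splice, splice]

@[simp]
lemma splice_self (x : V) (p : List V) : splice x p p = p :=
  List.takeWhile_append_dropWhile

lemma mem_of_mem_splice {x v : V} {p q : List V} (hv : v ∈ splice x p q) : v ∈ p ∨ v ∈ q :=
  (List.mem_append.mp hv).imp (fun h => (List.takeWhile_sublist _).subset h)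
    (fun h => (List.dropWhile_sublist _).subset h)

lemma mem_splice {x : V} {p q : List V} (hx : x ∈ q) : x ∈ splice x p q := by
  rw [splice, dropWhile_ne_eq_cons hx]; simp

lemma IsGVPath.splice {w : V → V → R} {u v u' v' x : V} {p q : List V} (hxp : x ∈ p)
    (hxq : x ∈ q) (hp : IsGVPath w u v p) (hq : IsGVPath w u' v' q) :
    IsGVPath w u v' (splice x p q) := by
  rw [eq_takeWhile_append_cons hxp] at hp
  rw [eq_takeWhile_append_cons hxq] at hq
  rw [LGV.splice, dropWhile_ne_eq_cons hxq]
  exact IsGVPath.append_cons hp hq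

lemma gvWeight_splice_mul_gvWeight_splice (w : V → V → R) {x : V} {p q : List V} (hxp : x ∈ p)
    (hxq : x ∈ q) :
    gvWeight w (splice x p q) * gvWeight w (splice x q p) = gvWeight w p * gvWeight w q := by
  obtain ⟨s, hs⟩ : ∃ s, p.dropWhile (· ≠ x) = x :: s := ⟨_, dropWhile_ne_eq_cons hxp⟩
  obtain ⟨t, ht⟩ : ∃ t, q.dropWhile (· ≠ x) = x :: t := ⟨_, dropWhile_ne_eq_cons hxq⟩
  conv_rhs => rw [← splice_self x p, ← splice_self x q]
  simp only [splice, hs, ht]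
  generalize p.takeWhile (· ≠ x) = A, q.takeWhile (· ≠ x) = B
  rw [gvWeight_append_cons w A x s, gvWeight_append_cons w A x t, gvWeight_append_cons w B x s,
    gvWeight_append_cons w B x t]
  ring

end Splice

section Meets

def OnOther (ℓ : ι → List V) (i : ι) (v : V) : Prop :=
  ∃ k, k ≠ i ∧ v ∈ ℓ k

def Meets (ℓ : ι → List V) (i : ι) : Prop :=
  ∃ v ∈ ℓ i, OnOther ℓ i v

lemma pairwise_disjoint_iff_not_exists_meets {ℓ : ι → List V} :
    (∀ i j, i ≠ j → (ℓ i).Disjoint (ℓ j)) ↔ ¬ ∃ i, Meets ℓ i := by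
  simp only [Meets, OnOther, List.Disjoint, not_exists, not_and]
  grind

end Meets

section TailSwap

variable [DecidableEq V] [DecidableEq ι]

def tailSwap (ℓ : ι → List V) (i j : ι) (x : V) : ι → List V :=
  Function.update (Function.update ℓ i (splice x (ℓ i) (ℓ j))) j (splice x (ℓ j) (ℓ i))

variable {ℓ : ι → List V} {i j k : ι} {x v : V}

lemma tailSwap_left (hij : i ≠ j) : tailSwap ℓ i j x i = splice x (ℓ i) (ℓ j) := by
  simp [tailSwap, hij]

lemma tailSwap_right : tailSwap ℓ i j x j = splice x (ℓ j) (ℓ i) := by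
  simp [tailSwap]

lemma tailSwap_of_ne (hki : k ≠ i) (hkj : k ≠ j) : tailSwap ℓ i j x k = ℓ k := by
  simp [tailSwap, hki, hkj]

lemma tailSwap_tailSwap (hij : i ≠ j) : tailSwap (tailSwap ℓ i j x) i j x = ℓ := by
  funext k
  rcases eq_or_ne k i with rfl | hki
  · simp [tailSwap_left hij, tailSwap_right]
  rcases eq_or_ne k j with rfl | hkj
  · simp [tailSwap_left hij, tailSwap_right]
  · rw [tailSwap_of_ne hki hkj, tailSwap_of_ne hki hkj]

lemma prod_gvWeight_tailSwap [Fintype ι] (w : V → V → R) (hij : i ≠ j) (hi : x ∈ ℓ i)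
    (hj : x ∈ ℓ j) : ∏ k, gvWeight w (tailSwap ℓ i j x k) = ∏ k, gvWeight w (ℓ k) := by
  have hsub : ({i, j} : Finset ι) ⊆ Finset.univ := Finset.subset_univ _
  rw [← Finset.prod_sdiff hsub, ← Finset.prod_sdiff (f := fun k => gvWeight w (ℓ k)) hsub,
    Finset.prod_pair hij, Finset.prod_pair hij, tailSwap_left hij, tailSwap_right,
    gvWeight_splice_mul_gvWeight_splice w hi hj]
  congr 1
  refine Finset.prod_congr rfl fun k hk => ?_
  simp only [Finset.mem_sdiff, Finset.mem_insert, Finset.mem_singleton, not_or] at hk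
  rw [tailSwap_of_ne hk.2.1 hk.2.2]

lemma isGVPath_tailSwap {w : V → V → R} {a b : ι → V} {σ : Equiv.Perm ι}
    (hℓ : ∀ k, IsGVPath w (a k) (b (σ k)) (ℓ k)) (hij : i ≠ j) (hi : x ∈ ℓ i) (hj : x ∈ ℓ j)
    (k : ι) : IsGVPath w (a k) (b ((σ * Equiv.swap i j) k)) (tailSwap ℓ i j x k) := by
  rcases eq_or_ne k i with rfl | hki
  · simpa [tailSwap_left hij] using IsGVPath.splice hi hj (hℓ k) (hℓ j)
  rcases eq_or_ne k j with rfl | hkj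
  · simpa [tailSwap_right] using IsGVPath.splice hj hi (hℓ k) (hℓ i)
  · simpa [tailSwap_of_ne hki hkj, Equiv.swap_apply_of_ne_of_ne hki hkj] using hℓ k

lemma mem_of_mem_tailSwap (hv : v ∈ tailSwap ℓ i j x k) : v ∈ ℓ k ∨ v ∈ ℓ i ∨ v ∈ ℓ j := by
  rcases eq_or_ne k j with rfl | hkj
  · rw [tailSwap_right] at hv
    exact (mem_of_mem_splice hv).imp_right Or.inl
  rcases eq_or_ne k i with rfl | hki
  · rw [tailSwap_left hkj] at hv
    exact (mem_of_mem_splice hv).imp_right Or.inr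
  · rw [tailSwap_of_ne hki hkj] at hv
    exact Or.inl hv

lemma onOther_of_onOther_tailSwap (hki : k ≠ i) (hkj : k ≠ j)
    (hv : OnOther (tailSwap ℓ i j x) k v) : OnOther ℓ k v := by
  obtain ⟨m, hmk, hvm⟩ := hv
  rcases mem_of_mem_tailSwap hvm with h | h | h
  exacts [⟨m, hmk, h⟩, ⟨i, hki.symm, h⟩, ⟨j, hkj.symm, h⟩]

end TailSwap

section Crossing

variable [DecidableEq V] [LinearOrder ι]

structure IsCrossing (ℓ : ι → List V) (i : ι) (x : V) (j : ι) : Prop where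
  le_of_meets : ∀ k, Meets ℓ k → i ≤ k
  mem : x ∈ ℓ i
  not_onOther : ∀ v ∈ (ℓ i).takeWhile (· ≠ x), ¬ OnOther ℓ i v
  isLeast : IsLeast {k | k ≠ i ∧ x ∈ ℓ k} j

variable {ℓ : ι → List V} {i j : ι} {x : V}

namespace IsCrossing

lemma ne (h : IsCrossing ℓ i x j) : j ≠ i := h.isLeast.1.1

lemma mem_right (h : IsCrossing ℓ i x j) : x ∈ ℓ j := h.isLeast.1.2

lemma meets (h : IsCrossing ℓ i x j) : Meets ℓ i := ⟨x, h.mem, j, h.ne, h.mem_right⟩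

lemma unique {i' j' : ι} {x' : V} (h : IsCrossing ℓ i x j) (h' : IsCrossing ℓ i' x' j') :
    i = i' ∧ x = x' ∧ j = j' := by
  obtain rfl : i = i' := le_antisymm (h.le_of_meets _ h'.meets) (h'.le_of_meets _ h.meets)
  obtain rfl : x = x' := by
    by_contra hne
    rcases mem_takeWhile_ne_or h.mem h'.mem hne with hx' | hx
    · exact h.not_onOther x' hx' ⟨j', h'.ne, h'.mem_right⟩
    · exact h'.not_onOther x hx ⟨j, h.ne, h.mem_right⟩
  exact ⟨rfl, rfl, h.isLeast.unique h'.isLeast⟩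

lemma tailSwap (h : IsCrossing ℓ i x j) (hnodup : (ℓ i).Nodup) :
    IsCrossing (tailSwap ℓ i j x) i x j := by
  have hij : i ≠ j := h.ne.symm
  refine ⟨?le_of_meets, ?mem, ?not_onOther, ⟨⟨h.ne, ?mem_right⟩, ?least⟩⟩
  case le_of_meets =>
    rintro k ⟨v, hv, hvo⟩
    rcases eq_or_ne k i with rfl | hki
    · exact le_rfl
    rcases eq_or_ne k j with rfl | hkj
    · exact h.le_of_meets k ⟨x, h.mem_right, i, hij, h.mem⟩
    rw [tailSwap_of_ne hki hkj] at hv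
    exact h.le_of_meets k ⟨v, hv, onOther_of_onOther_tailSwap hki hkj hvo⟩
  case mem =>
    rw [tailSwap_left hij]
    exact mem_splice h.mem_right
  case not_onOther =>
    rintro v hv ⟨k, hki, hvk⟩
    rw [tailSwap_left hij, takeWhile_splice] at hv
    rcases eq_or_ne k j with rfl | hkj
    · rw [tailSwap_right] at hvk
      rcases List.mem_append.mp hvk with hvk | hvi
      · exact h.not_onOther v hv ⟨k, hki, (List.takeWhile_sublist _).subset hvk⟩
      · -- `v` would occur on the simple path `ℓ i` both before and after `x`
        rw [← List.takeWhile_append_dropWhile (p := (· ≠ x)) (l := ℓ i)] at hnodup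
        exact List.disjoint_of_nodup_append hnodup hv hvi
    · rw [tailSwap_of_ne hki hkj] at hvk
      exact h.not_onOther v hv ⟨k, hki, hvk⟩
  case mem_right =>
    rw [tailSwap_right]
    exact mem_splice h.mem
  case least =>
    rintro k ⟨hki, hxk⟩
    rcases eq_or_ne k j with rfl | hkj
    · exact le_rfl
    rw [tailSwap_of_ne hki hkj] at hxk
    exact h.isLeast.2 ⟨hki, hxk⟩

end IsCrossing

lemma exists_isCrossing [Finite ι] (h : ∃ i, Meets ℓ i) : ∃ i x j, IsCrossing ℓ i x j := by
  obtain ⟨i, hi, hmin⟩ := Set.exists_min_image {k | Meets ℓ k} id (Set.toFinite _) h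
  obtain ⟨x, hx, hxo, hfirst⟩ := exists_mem_forall_mem_takeWhile_not (P := OnOther ℓ i) hi
  obtain ⟨j, hj, hjmin⟩ := Set.exists_min_image {k | k ≠ i ∧ x ∈ ℓ k} id (Set.toFinite _) hxo
  exact ⟨i, x, j, hmin, hx, hfirst, hj, hjmin⟩

open Classical in
noncomputable def crossingSwap (s : Equiv.Perm ι × (ι → List V)) :
    Equiv.Perm ι × (ι → List V) :=
  if h : ∃ c : ι × V × ι, IsCrossing s.2 c.1 c.2.1 c.2.2 then
    (s.1 * Equiv.swap h.choose.1 h.choose.2.2, tailSwap s.2 h.choose.1 h.choose.2.2 h.choose.2.1)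
  else s

lemma crossingSwap_eq {s : Equiv.Perm ι × (ι → List V)} (h : IsCrossing s.2 i x j) :
    crossingSwap s = (s.1 * Equiv.swap i j, tailSwap s.2 i j x) := by
  have hex : ∃ c : ι × V × ι, IsCrossing s.2 c.1 c.2.1 c.2.2 := ⟨(i, x, j), h⟩
  obtain ⟨hi, hx, hj⟩ := hex.choose_spec.unique h
  rw [crossingSwap, dif_pos hex, hi, hx, hj]

end Crossing

section Determinant

variable {α : Type*}

lemma finite_setOf_forall_mem [Finite ι] {S : ι → ι → Set α} (hS : ∀ i j, (S i j).Finite) :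
    {s : Equiv.Perm ι × (ι → α) | ∀ i, s.2 i ∈ S i (s.1 i)}.Finite :=
  (Set.finite_univ.prod (Set.Finite.pi fun i => Set.finite_iUnion (hS i))).subset
    fun s hs => ⟨trivial, fun i _ => Set.mem_iUnion.mpr ⟨s.1 i, hs i⟩⟩

theorem det_eq_finsum_sign_smul_prod [Fintype ι] [DecidableEq ι] (M : Matrix ι ι R)
    {S : ι → ι → Set α} (hS : ∀ i j, (S i j).Finite) (f : α → R)
    (hM : ∀ i j, M i j = ∑ᶠ p ∈ S i j, f p) :
    M.det = ∑ᶠ s ∈ {s : Equiv.Perm ι × (ι → α) | ∀ i, s.2 i ∈ S i (s.1 i)},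
      (Equiv.Perm.sign s.1 : ℤ) • ∏ i, f (s.2 i) := by
  rw [finsum_mem_eq_finite_toFinset_sum _ (finite_setOf_forall_mem hS),
    Finset.sum_finset_product _ Finset.univ
      (fun σ => Fintype.piFinset fun i => (hS i (σ i)).toFinset) (by simp),
    ← Matrix.det_transpose, Matrix.det_apply]
  refine Finset.sum_congr rfl fun σ _ => ?_
  simp_rw [Matrix.transpose_apply, hM, finsum_mem_eq_finite_toFinset_sum _ (hS _ _),
    Finset.prod_univ_sum, Units.smul_def, Finset.smul_sum]

end Determinant

section PathSystems

def pathSystems (w : V → V → R) (a b : ι → V) : Set (Equiv.Perm ι × (ι → List V)) :=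
  {s | ∀ i, IsGVPath w (a i) (b (s.1 i)) (s.2 i)}

variable {w : V → V → R}

lemma finite_pathSystems [Finite ι] [Finite V]
    (hacyc : Irreflexive (Relation.TransGen fun u v => w u v ≠ 0)) (a b : ι → V) :
    (pathSystems w a b).Finite :=
  finite_setOf_forall_mem fun _ _ => finite_setOf_isGVPath hacyc _ _

theorem det_eq_finsum_pathSystems [Fintype ι] [DecidableEq ι] [Finite V]
    (hacyc : Irreflexive (Relation.TransGen fun u v => w u v ≠ 0)) {a b : ι → V}
    {M : Matrix ι ι R} (hM : ∀ i j, M i j = ∑ᶠ p ∈ {p | IsGVPath w (a i) (b j) p}, gvWeight w p) :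
    M.det = ∑ᶠ s ∈ pathSystems w a b, (Equiv.Perm.sign s.1 : ℤ) • ∏ i, gvWeight w (s.2 i) :=
  det_eq_finsum_sign_smul_prod M (fun _ _ => finite_setOf_isGVPath hacyc _ _) _ hM

lemma setOf_disjoint_eq_pathSystems_diff
    (hacyc : Irreflexive (Relation.TransGen fun u v => w u v ≠ 0)) (a b : ι → V) :
    {s : Equiv.Perm ι × (ι → List V) | (∀ i, IsGVPath w (a i) (b (s.1 i)) (s.2 i)) ∧
      (∀ i, (s.2 i).Nodup) ∧ (∀ i j, i ≠ j → (s.2 i).Disjoint (s.2 j))} =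
      pathSystems w a b \ {s | ∃ i, Meets s.2 i} := by
  ext s
  simp only [Set.mem_ofPred_eq, Set.mem_sdiff, pathSystems,
    ← pairwise_disjoint_iff_not_exists_meets]
  exact ⟨fun h => ⟨h.1, h.2.2⟩, fun h => ⟨h.1, fun i => IsGVPath.nodup hacyc (h.1 i), h.2⟩⟩

theorem finsum_pathSystems_inter_meets_eq_zero [Fintype ι] [LinearOrder ι] [Finite V]
    (hacyc : Irreflexive (Relation.TransGen fun u v => w u v ≠ 0)) (a b : ι → V) :
    ∑ᶠ s ∈ pathSystems w a b ∩ {s | ∃ i, Meets s.2 i},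
      (Equiv.Perm.sign s.1 : ℤ) • ∏ i, gvWeight w (s.2 i) = 0 := by
  classical
  have hfin : (pathSystems w a b ∩ {s | ∃ i, Meets s.2 i}).Finite :=
    (finite_pathSystems hacyc a b).inter_of_left _
  have hcross : ∀ s ∈ hfin.toFinset, ∃ i x j, IsCrossing s.2 i x j ∧ (s.2 i).Nodup ∧
      s ∈ pathSystems w a b := fun s hs => by
    obtain ⟨hpath, hmeets⟩ := hfin.mem_toFinset.mp hs
    obtain ⟨i, x, j, hc⟩ := exists_isCrossing hmeets
    exact ⟨i, x, j, hc, IsGVPath.nodup hacyc (hpath i), hpath⟩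
  rw [finsum_mem_eq_finite_toFinset_sum _ hfin]
  refine Finset.sum_involution (fun s _ => crossingSwap s) ?cancel ?ne_self ?mem ?involutive
  case cancel =>
    intro s hs
    obtain ⟨i, x, j, hc, -⟩ := hcross s hs
    rw [crossingSwap_eq hc, prod_gvWeight_tailSwap w hc.ne.symm hc.mem hc.mem_right,
      Equiv.Perm.sign_mul, Equiv.Perm.sign_swap hc.ne.symm]
    simp
  case ne_self =>
    intro s hs _ hfix
    obtain ⟨i, x, j, hc, -⟩ := hcross s hs
    rw [crossingSwap_eq hc] at hfix
    have : Equiv.swap i j = 1 := mul_eq_left.mp (congrArg Prod.fst hfix)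
    exact hc.ne (Equiv.swap_eq_one_iff.mp this).symm
  case mem =>
    intro s hs
    obtain ⟨i, x, j, hc, hnodup, hpath⟩ := hcross s hs
    rw [crossingSwap_eq hc, hfin.mem_toFinset]
    exact ⟨isGVPath_tailSwap hpath hc.ne.symm hc.mem hc.mem_right, i, (hc.tailSwap hnodup).meets⟩
  case involutive =>
    intro s hs
    obtain ⟨i, x, j, hc, hnodup, -⟩ := hcross s hs
    rw [crossingSwap_eq hc, crossingSwap_eq (s := (s.1 * Equiv.swap i j, tailSwap s.2 i j x))
      (hc.tailSwap hnodup), Equiv.mul_swap_mul_self, tailSwap_tailSwap hc.ne.symm]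

end PathSystems

end LGV

theorem lindstrom_gessel_viennot_general {V : Type*} [Fintype V]
    {R : Type*} [CommRing R] (w : V → V → R)
    (hacyc : Irreflexive (Relation.TransGen fun u v => w u v ≠ 0))
    (n : ℕ) (a b : Fin n → V)
    (Vmat : Matrix (Fin n) (Fin n) R)
    (hV : ∀ i j, Vmat i j = ∑ᶠ p ∈ {p : List V | IsGVPath w (a i) (b j) p}, gvWeight w p) :
    Vmat.det =
      ∑ᶠ x ∈ {x : Equiv.Perm (Fin n) × (Fin n → List V) |
          (∀ i, IsGVPath w (a i) (b (x.1 i)) (x.2 i)) ∧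
          (∀ i, (x.2 i).Nodup) ∧
          (∀ i j, i ≠ j → (x.2 i).Disjoint (x.2 j))},
        (Equiv.Perm.sign x.1 : ℤ) • ∏ i, gvWeight w (x.2 i) := by
  rw [LGV.det_eq_finsum_pathSystems hacyc hV, LGV.setOf_disjoint_eq_pathSystems_diff hacyc,
    ← finsum_mem_inter_add_sdiff _ (LGV.finite_pathSystems hacyc a b),
    LGV.finsum_pathSystems_inter_meets_eq_zero hacyc, zero_add]

/-- **Lindström–Gessel–Viennot lemma.** Let `w : V × V → R` be an edge-weight function
on a finite vertex set `V` whose associated relation `w u v ≠ 0` is acyclic, let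
`a 0, …, a (n-1)` be distinct left endpoints and `b 0, …, b (n-1)` distinct right
endpoints, and let `Vmat i j` be the total weight of all paths from `a i` to `b j`.
Then `det Vmat` is the sum, over all pairs of a permutation `σ` and an `n`-tuple `ℓ` of
pairwise vertex-disjoint paths with `ℓ i` a path from `a i` to `b (σ i)`, of
`sign σ` times the product of the weights of the paths `ℓ i`. -/
theorem lindstrom_gessel_viennot {V : Type*} [Fintype V] [DecidableEq V]
    {R : Type*} [CommRing R] (w : V → V → R)
    (hacyc : Irreflexive (Relation.TransGen fun u v => w u v ≠ 0))
    (n : ℕ) (a b : Fin n → V) (ha : Function.Injective a) (hb : Function.Injective b)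
    (Vmat : Matrix (Fin n) (Fin n) R)
    (hV : ∀ i j, Vmat i j = ∑ᶠ p ∈ {p : List V | IsGVPath w (a i) (b j) p}, gvWeight w p) :
    Vmat.det =
      ∑ᶠ x ∈ {x : Equiv.Perm (Fin n) × (Fin n → List V) |
          (∀ i, IsGVPath w (a i) (b (x.1 i)) (x.2 i)) ∧
          (∀ i, (x.2 i).Nodup) ∧
          (∀ i j, i ≠ j → (x.2 i).Disjoint (x.2 j))},
        (Equiv.Perm.sign x.1 : ℤ) • ∏ i, gvWeight w (x.2 i) :=
  lindstrom_gessel_viennot_general w hacyc n a b Vmat hV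
end

section
/- Let R be a principal ideal domain and let M be a k × n matrix over R. Then the cokernels of M and of its transpose are isomorphic as R-modules up to free summands; precisely, coker M ⊕ R^n ≅ coker Mᵀ ⊕ R^k as R-modules. In particular, if M is square (k = n) then coker M ≅ coker Mᵀ. -/
/-! Over a PID the map `M : Rⁿ → Rᵏ` has bases of `Rⁿ` and `Rᵏ` in which its matrix vanishes except
for entries `a₁, …, a_r` in distinct rows and columns: take a Smith normal form of the free
submodule `range M ⊆ Rᵏ` and lift its basis along a splitting `Rⁿ ≅ ker M × range M`. In such bases
`coker M ≅ ⊕ R/(aᵢ) ⊕ R^(k-r)`. The dual bases put the transpose of `M` into the same shape with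
the same `aᵢ`, so `coker Mᵀ ≅ ⊕ R/(aᵢ) ⊕ R^(n-r)`, and adding `Rⁿ`, resp. `Rᵏ`, balances the
free parts. -/

open Matrix Module Submodule

noncomputable def Function.Embedding.sumComplRangeEquiv {β κ : Type*} (f : β ↪ κ)
    [DecidablePred (· ∈ Set.range f)] : β ⊕ ↥(Set.range f)ᶜ ≃ κ :=
  ((Equiv.ofInjective f f.injective).sumCongr (Equiv.refl _)).trans (Equiv.Set.sumCompl _)

@[simp]
theorem Function.Embedding.sumComplRangeEquiv_symm_apply {β κ : Type*} (f : β ↪ κ)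
    [DecidablePred (· ∈ Set.range f)] (i : β) : f.sumComplRangeEquiv.symm (f i) = .inl i :=
  f.sumComplRangeEquiv.symm_apply_eq.mpr rfl

theorem Function.Embedding.card_compl_range_add_card {β κ : Type*} [Fintype β] [Fintype κ]
    (f : β ↪ κ) [DecidablePred (· ∈ Set.range f)] :
    Fintype.card ↥(Set.range f)ᶜ + Fintype.card β = Fintype.card κ := by
  rw [← Fintype.card_congr f.sumComplRangeEquiv, Fintype.card_sum, add_comm]

theorem Submodule.span_range_smul_single_inl {R β γ : Type*} [CommSemiring R] [Fintype β]
    [DecidableEq β] [DecidableEq γ] (a : β → R) :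
    span R (Set.range fun i => a i • (Pi.single (Sum.inl i) 1 : β ⊕ γ → R)) =
      pi Set.univ (Sum.elim (fun i => span R {a i}) fun _ => ⊥) := by
  ext v
  simp only [mem_span_range_iff_exists_fun, mem_pi, Set.mem_univ, true_implies, Sum.forall,
    Sum.elim_inl, Sum.elim_inr, mem_span_singleton, mem_bot]
  constructor
  · rintro ⟨c, rfl⟩
    exact ⟨fun i => ⟨c i, by simp [Finset.sum_apply, Pi.single_apply]⟩, fun x => by simp⟩
  · rintro ⟨hl, hr⟩
    choose c hc using hl
    refine ⟨c, funext ?_⟩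
    rintro (i | x) <;> simp [Finset.sum_apply, Pi.single_apply, ← hc, hr, mul_comm]

noncomputable def LinearEquiv.prodFunOfCardAddEq (R : Type*) [Semiring R]
    {α β γ δ : Type*} [Fintype α] [Fintype β] [Fintype γ] [Fintype δ]
    (h : Fintype.card α + Fintype.card β = Fintype.card γ + Fintype.card δ) :
    ((α → R) × (β → R)) ≃ₗ[R] ((γ → R) × (δ → R)) :=
  (sumArrowLequivProdArrow α β R R).symm ≪≫ₗ
    funCongrLeft R R (Fintype.equivOfCardEq (by simpa using h.symm)) ≪≫ₗ
      sumArrowLequivProdArrow γ δ R R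

theorem Matrix.mulVecLin_transpose_comp_dotProductEquiv_symm {R m n : Type*} [CommSemiring R]
    [Fintype m] [Fintype n] [DecidableEq m] [DecidableEq n] (M : Matrix m n R) :
    Mᵀ.mulVecLin ∘ₗ (dotProductEquiv R m).symm.toLinearMap =
      (dotProductEquiv R n).symm.toLinearMap ∘ₗ Dual.transpose (R := R) M.mulVecLin := by
  ext l i
  obtain ⟨w, rfl⟩ := (dotProductEquiv R m).surjective l
  simp [Dual.transpose_apply]
  rfl

namespace LinearMap

variable {R V W V' W' : Type*} [CommRing R] [AddCommGroup V] [Module R V] [AddCommGroup W]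
  [Module R W] [AddCommGroup V'] [Module R V'] [AddCommGroup W'] [Module R W']

/-- As in `Basis.SmithNormalForm`, no divisibility among the `a i` is required. -/
structure SmithNormalForm (φ : V →ₗ[R] W) (ι κ β : Type*) where
  bV : Basis ι R V
  bW : Basis κ R W
  f : β ↪ κ
  g : β ↪ ι
  a : β → R
  apply_bV_g : ∀ i, φ (bV (g i)) = a i • bW (f i)
  apply_bV_of_notMem : ∀ j ∉ Set.range g, φ (bV j) = 0

theorem exists_smithNormalForm [IsDomain R] [IsPrincipalIdealRing R] {ι κ : Type*} [Finite ι]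
    [Finite κ] (bV : Basis ι R V) (bW : Basis κ R W) (φ : V →ₗ[R] W) :
    ∃ d r : ℕ, Nonempty (φ.SmithNormalForm (Fin d ⊕ Fin r) κ (Fin r)) := by
  obtain ⟨r, snf⟩ := (range φ).smithNormalForm bW
  obtain ⟨d, bK⟩ := (ker φ).basisOfPid bV
  have : Projective R (range φ) := .of_basis snf.bN
  obtain ⟨l, hl⟩ := Module.projective_lifting_property φ.rangeRestrict LinearMap.id
    φ.surjective_rangeRestrict
  have hexact : Function.Exact (ker φ).subtype φ.rangeRestrict :=
    exact_iff.mpr (by rw [ker_rangeRestrict, Submodule.range_subtype])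
  obtain ⟨e, -, he⟩ := hexact.splitSurjectiveEquiv (ker φ).injective_subtype ⟨l, hl⟩
  have hφe : ∀ x, φ (e.symm x) = x.2 := fun x => by
    simpa using congrArg Subtype.val (LinearMap.congr_fun he (e.symm x))
  refine ⟨d, r, ⟨(bK.prod snf.bN).map e.symm, snf.bM, snf.f, .inr, snf.a, fun i => ?_, ?_⟩⟩
  · simp [hφe, snf.snf]
  · rintro (j | j) hj
    · simp [hφe]
    · exact absurd ⟨j, rfl⟩ hj

namespace SmithNormalForm

variable {φ : V →ₗ[R] W} {ι κ β : Type*} (s : φ.SmithNormalForm ι κ β)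

noncomputable def congr {ψ : V' →ₗ[R] W'} (eV : V ≃ₗ[R] V') (eW : W ≃ₗ[R] W')
    (h : ψ ∘ₗ eV.toLinearMap = eW.toLinearMap ∘ₗ φ) : ψ.SmithNormalForm ι κ β where
  bV := s.bV.map eV
  bW := s.bW.map eW
  f := s.f
  g := s.g
  a := s.a
  apply_bV_g i := by simpa [s.apply_bV_g] using LinearMap.congr_fun h (s.bV (s.g i))
  apply_bV_of_notMem j hj := by
    simpa [s.apply_bV_of_notMem j hj] using LinearMap.congr_fun h (s.bV j)

theorem transpose_dualBasis_apply [Fintype κ] [DecidableEq κ] (l : κ) (j : ι) :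
    Dual.transpose (R := R) φ (s.bW.dualBasis l) (s.bV j) = s.bW.repr (φ (s.bV j)) l := by
  simp [Dual.transpose_apply]

noncomputable def transpose [Fintype ι] [Fintype κ] [DecidableEq ι] [DecidableEq κ] :
    (Dual.transpose (R := R) φ).SmithNormalForm κ ι β where
  bV := s.bW.dualBasis
  bW := s.bV.dualBasis
  f := s.g
  g := s.f
  a := s.a
  apply_bV_g i := by
    refine s.bV.ext fun j => ?_
    rw [transpose_dualBasis_apply]
    by_cases hj : j ∈ Set.range s.g
    · obtain ⟨i', rfl⟩ := hj
      by_cases h : i' = i <;> simp [s.apply_bV_g, h]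
    · have hgi : s.g i ≠ j := fun h => hj ⟨i, h⟩
      simp [s.apply_bV_of_notMem j hj, hgi]
  apply_bV_of_notMem l hl := by
    refine s.bV.ext fun j => ?_
    rw [transpose_dualBasis_apply]
    by_cases hj : j ∈ Set.range s.g
    · obtain ⟨i, rfl⟩ := hj
      have hfi : s.f i ≠ l := fun h => hl ⟨i, h⟩
      simp [s.apply_bV_g, hfi]
    · simp [s.apply_bV_of_notMem j hj]

theorem range_eq_span : range φ = span R (Set.range fun i => s.a i • s.bW (s.f i)) := by
  refine le_antisymm ?_ (span_le.mpr ?_)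
  · rw [range_eq_map, ← s.bV.span_eq, map_span, span_le]
    rintro _ ⟨_, ⟨j, rfl⟩, rfl⟩
    by_cases hj : j ∈ Set.range s.g
    · obtain ⟨i, rfl⟩ := hj
      exact subset_span ⟨i, (s.apply_bV_g i).symm⟩
    · simp [s.apply_bV_of_notMem j hj]
  · rintro _ ⟨i, rfl⟩
    exact ⟨_, s.apply_bV_g i⟩

noncomputable def quotientRangeEquiv [Fintype β] [Fintype κ] :
    (W ⧸ range φ) ≃ₗ[R] (Π i, R ⧸ Ideal.span {s.a i}) × (↥(Set.range s.f)ᶜ → R) := by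
  classical
  let E := (s.bW.reindex s.f.sumComplRangeEquiv.symm).equivFun
  have hE : map E.toLinearMap (range φ) =
      Submodule.pi Set.univ (Sum.elim (fun i => Ideal.span {s.a i}) fun _ => ⊥) := by
    rw [s.range_eq_span, map_span, ← Set.range_comp, ← span_range_smul_single_inl]
    congr! with i
    simp [E, Finsupp.single_eq_pi_single]
  exact Quotient.equiv _ _ E hE ≪≫ₗ quotientPi _ ≪≫ₗ LinearEquiv.sumPiEquivProdPi R _ _ _ ≪≫ₗ
    (LinearEquiv.refl _ _).prodCongr (LinearEquiv.piCongrRight fun _ => quotEquivOfEqBot ⊥ rfl)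

end SmithNormalForm

end LinearMap

/-- **Cokernels of a matrix and of its transpose.** Over a PID `R`, for a `k × n`
matrix `M`, `coker M ⊕ Rⁿ ≅ coker Mᵀ ⊕ Rᵏ` as `R`-modules; in particular if `M` is
square (`k = n`) then `coker M ≅ coker Mᵀ`. -/
theorem coker_transpose {R : Type*} [CommRing R] [IsDomain R] [IsPrincipalIdealRing R]
    {k n : ℕ} (M : Matrix (Fin k) (Fin n) R) :
    Nonempty ((((Fin k → R) ⧸ LinearMap.range M.mulVecLin) × (Fin n → R)) ≃ₗ[R]
        (((Fin n → R) ⧸ LinearMap.range Mᵀ.mulVecLin) × (Fin k → R))) ∧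
      (k = n → Nonempty (((Fin k → R) ⧸ LinearMap.range M.mulVecLin) ≃ₗ[R]
        ((Fin n → R) ⧸ LinearMap.range Mᵀ.mulVecLin))) := by
  classical
  obtain ⟨d, r, ⟨s⟩⟩ :=
    M.mulVecLin.exists_smithNormalForm (Pi.basisFun R (Fin n)) (Pi.basisFun R (Fin k))
  let sT := s.transpose.congr (dotProductEquiv R (Fin k)).symm (dotProductEquiv R (Fin n)).symm
    M.mulVecLin_transpose_comp_dotProductEquiv_symm
  have hk := s.f.card_compl_range_add_card
  have hn := sT.f.card_compl_range_add_card
  have hdr : Fintype.card (Fin d ⊕ Fin r) = n := by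
    simpa using (Module.finrank_eq_card_basis s.bV).symm
  simp only [Fintype.card_fin] at hk hn
  refine ⟨⟨s.quotientRangeEquiv.prodCongr (.refl R _) ≪≫ₗ .prodAssoc R _ _ _ ≪≫ₗ
      (LinearEquiv.refl R _).prodCongr (.prodFunOfCardAddEq R ?_) ≪≫ₗ
      (LinearEquiv.prodAssoc R _ _ _).symm ≪≫ₗ
      sT.quotientRangeEquiv.symm.prodCongr (.refl R _)⟩, ?_⟩
  · simp only [Fintype.card_fin]
    omega
  · rintro rfl
    exact ⟨s.quotientRangeEquiv ≪≫ₗ (LinearEquiv.refl R _).prodCongr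
      (.funCongrLeft R R (Fintype.equivOfCardEq (by omega))) ≪≫ₗ sT.quotientRangeEquiv.symm⟩
end

section
/- Let M be an n × n integer matrix with det M ≠ 0, so that the cokernels G = ℤ^n / M(ℤ^n) and H = ℤ^n / Mᵀ(ℤ^n) are finite of cardinality |det M|. Choose set-theoretic sections t : G → ℤ^n and s : H → ℤ^n of the quotient maps, and define the complex matrix U with rows indexed by x ∈ G and columns indexed by y ∈ H via U_{x,y} = exp(2πi · (s y)ᵀ M^{-1} (t x)) / sqrt(|det M|), where M^{-1} is the inverse of M over ℚ. Then U is unitary: U * U^† = I, where U^† is the conjugate transpose of U. -/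
open Matrix
open scoped Classical

/-- The rational number `Yᵀ M⁻¹ X`, for an integer matrix `M` (inverted over `ℚ`) and
integer vectors `X`, `Y`. -/
noncomputable def cokerPairing {n : ℕ} (M : Matrix (Fin n) (Fin n) ℤ)
    (X Y : Fin n → ℤ) : ℚ :=
  dotProduct (fun i => (Y i : ℚ))
    ((M.map ((↑) : ℤ → ℚ))⁻¹.mulVec fun i => (X i : ℚ))


lemma card_quot_eq_natAbs_det {n : ℕ} (N : Submodule ℤ (Fin n → ℤ))
    (e : (Fin n → ℤ) ≃ₗ[ℤ] N) :
    Nat.card ((Fin n → ℤ) ⧸ N) =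
      (LinearMap.det ((N.subtype).comp (e : (Fin n → ℤ) →ₗ[ℤ] N))).natAbs := by
  obtain ⟨m, snf⟩ := N.smithNormalForm (Pi.basisFun ℤ (Fin n))
  have hm : m = n := by
    have h1 : N.toAddSubgroup.index ≠ 0 :=
      Int.submodule_toAddSubgroup_index_ne_zero_iff.mpr ⟨e.symm⟩
    simpa using snf.toAddSubgroup_index_ne_zero_iff.mp h1
  subst hm
  -- left side
  have hcard : Nat.card ((Fin m → ℤ) ⧸ N) = ∏ i, (snf.a i).natAbs := by
    have h0 : Nat.card ((Fin m → ℤ) ⧸ N) = N.toAddSubgroup.index := rfl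
    rw [h0, snf.toAddSubgroup_index_eq_pow_mul_prod]
    simp [Ideal.span_singleton_toAddSubgroup_eq_zmultiples, Int.index_zmultiples]
  -- right side
  have hf : Function.Bijective snf.f := by
    refine ⟨snf.f.injective, ?_⟩
    exact Finite.surjective_of_injective snf.f.injective
  set fe : Fin m ≃ Fin m := Equiv.ofBijective snf.f hf with hfe
  let e₀ : (Fin m → ℤ) ≃ₗ[ℤ] N := snf.bM.equiv snf.bN fe.symm
  have hassoc : (LinearMap.det ((N.subtype).comp (e : (Fin m → ℤ) →ₗ[ℤ] N))).natAbs =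
      (LinearMap.det ((N.subtype).comp (e₀ : (Fin m → ℤ) →ₗ[ℤ] N))).natAbs := by
    exact Int.natAbs_eq_iff_associated.mpr (LinearMap.associated_det_comp_equiv _ _ _)
  rw [hcard, hassoc]
  have hdet : LinearMap.det ((N.subtype).comp (e₀ : (Fin m → ℤ) →ₗ[ℤ] N)) =
      ∏ j, snf.a (fe.symm j) := by
    have hmat : LinearMap.toMatrix snf.bM snf.bM ((N.subtype).comp (e₀ : (Fin m → ℤ) →ₗ[ℤ] N)) =
        Matrix.diagonal (fun j => snf.a (fe.symm j)) := by
      ext i j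
      have happ : (N.subtype).comp (e₀ : (Fin m → ℤ) →ₗ[ℤ] N) (snf.bM j)
          = snf.a (fe.symm j) • snf.bM j := by
        show ((snf.bM.equiv snf.bN fe.symm (snf.bM j) : N) : Fin m → ℤ) = _
        rw [Module.Basis.equiv_apply, snf.snf]
        congr 1
        exact congrArg snf.bM (fe.apply_symm_apply j)
      rw [LinearMap.toMatrix_apply, happ, _root_.map_smul, Module.Basis.repr_self, Finsupp.smul_single,
        smul_eq_mul, mul_one]
      by_cases h : i = j
      · rw [h, Matrix.diagonal_apply_eq, Finsupp.single_eq_same]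
      · rw [Matrix.diagonal_apply_ne _ h, Finsupp.single_eq_of_ne h]
    rw [← LinearMap.det_toMatrix snf.bM, hmat, Matrix.det_diagonal]
  rw [hdet, Fintype.prod_equiv fe.symm _ (fun i => snf.a i) (fun j => rfl)]
  exact (map_prod Int.natAbsHom _ Finset.univ).symm

lemma mulVecLin_injective_of_det {n : ℕ} (M : Matrix (Fin n) (Fin n) ℤ) (hM : M.det ≠ 0) :
    Function.Injective M.mulVecLin := by
  rw [← LinearMap.ker_eq_bot]
  rw [Submodule.eq_bot_iff]
  intro v hv
  have hv' : M.mulVec v = 0 := hv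
  have h2 : M.det • v = 0 := by
    have := congrArg (fun w => (Matrix.adjugate M).mulVec w) hv'
    simpa [Matrix.mulVec_mulVec, Matrix.adjugate_mul, Matrix.smul_mulVec] using this
  exact (smul_eq_zero.mp h2).resolve_left hM

lemma card_coker_eq {n : ℕ} (M : Matrix (Fin n) (Fin n) ℤ) (hM : M.det ≠ 0) :
    Nat.card ((Fin n → ℤ) ⧸ LinearMap.range M.mulVecLin) = M.det.natAbs := by
  have hinj := mulVecLin_injective_of_det M hM
  rw [card_quot_eq_natAbs_det _ (LinearEquiv.ofInjective M.mulVecLin hinj)]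
  congr 1
  have : (LinearMap.range M.mulVecLin).subtype.comp
      ((LinearEquiv.ofInjective M.mulVecLin hinj : (Fin n → ℤ) →ₗ[ℤ] _)) = M.mulVecLin := by
    ext v
    rfl
  rw [this, ← Matrix.toLin'_apply', LinearMap.det_toLin']



namespace CokerAux

noncomputable def E (r : ℚ) : ℂ := Complex.exp (2 * Real.pi * Complex.I * r)

lemma E_add (r s : ℚ) : E (r + s) = E r * E s := by
  rw [E, E, E, ← Complex.exp_add]
  push_cast
  ring_nf

lemma E_int (k : ℤ) : E (k : ℚ) = 1 := by
  rw [E]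
  have := Complex.exp_int_mul_two_pi_mul_I k
  rw [← this]
  congr 1
  push_cast
  ring

lemma E_eq_one_iff (r : ℚ) : E r = 1 ↔ ∃ k : ℤ, r = k := by
  constructor
  · intro h
    rw [E, Complex.exp_eq_one_iff] at h
    obtain ⟨k, hk⟩ := h
    refine ⟨k, ?_⟩
    have h2 : (2 : ℂ) * Real.pi * Complex.I ≠ 0 := by
      simp [Real.pi_ne_zero, Complex.I_ne_zero]
    have h3 : ((r : ℂ) - k) * (2 * Real.pi * Complex.I) = 0 := by
      rw [sub_mul, mul_comm ((r:ℂ)), hk]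
      ring
    have : (r : ℂ) = (k : ℂ) := by
      rcases mul_eq_zero.mp h3 with h | h
      · linear_combination h
      · exact absurd h h2
    exact_mod_cast this
  · rintro ⟨k, rfl⟩
    exact E_int k

lemma conj_E (r : ℚ) : (starRingEnd ℂ) (E r) = E (-r) := by
  rw [E, E, ← Complex.exp_conj]
  congr 1
  simp only [_root_.map_mul, map_ofNat, Complex.conj_ofReal, Complex.conj_I, map_ratCast]
  push_cast
  ring

variable {n : ℕ} (M : Matrix (Fin n) (Fin n) ℤ) (hM : M.det ≠ 0)

lemma Qdet : (M.map ((↑) : ℤ → ℚ)).det = (M.det : ℚ) := by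
  have := (RingHom.map_det (Int.castRingHom ℚ) M).symm
  simpa using this

lemma Qmul (hM : M.det ≠ 0) :
    (M.map ((↑) : ℤ → ℚ)) * (M.map ((↑) : ℤ → ℚ))⁻¹ = 1 := by
  apply Matrix.mul_nonsing_inv
  rw [Qdet]
  exact isUnit_iff_ne_zero.mpr (by exact_mod_cast hM)

lemma castVec_mulVec (A : Matrix (Fin n) (Fin n) ℤ) (w : Fin n → ℤ) :
    (fun i => ((A.mulVec w) i : ℚ)) = (A.map ((↑) : ℤ → ℚ)).mulVec (fun i => (w i : ℚ)) := by
  funext i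
  exact (Int.castRingHom ℚ).map_mulVec A w i

lemma pairing_shift (hM : M.det ≠ 0) (X w : Fin n → ℤ) :
    cokerPairing M X (Mᵀ.mulVec w) = ((dotProduct w X : ℤ) : ℚ) := by
  rw [cokerPairing, castVec_mulVec]
  rw [Matrix.transpose_map]
  rw [Matrix.mulVec_transpose, ← Matrix.dotProduct_mulVec, Matrix.mulVec_mulVec, Qmul M hM,
    Matrix.one_mulVec]
  rw [dotProduct, dotProduct]
  push_cast
  rfl

lemma pairing_sub_left (X X' Y : Fin n → ℤ) :
    cokerPairing M (X - X') Y = cokerPairing M X Y - cokerPairing M X' Y := by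
  rw [cokerPairing, cokerPairing, cokerPairing]
  have : (fun i => (((X - X') i : ℤ) : ℚ)) =
      (fun i => ((X i : ℤ) : ℚ)) - (fun i => ((X' i : ℤ) : ℚ)) := by
    funext i; simp
  rw [this, Matrix.mulVec_sub, dotProduct_sub]

lemma pairing_add_right (X Y Y' : Fin n → ℤ) :
    cokerPairing M X (Y + Y') = cokerPairing M X Y + cokerPairing M X Y' := by
  rw [cokerPairing, cokerPairing, cokerPairing]
  have : (fun i => (((Y + Y') i : ℤ) : ℚ)) =
      (fun i => ((Y i : ℤ) : ℚ)) + (fun i => ((Y' i : ℤ) : ℚ)) := by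
    funext i; simp
  rw [this, add_dotProduct]

end CokerAux


open CokerAux in
/-- **The discrete Fourier transform of the cokernel pairing is unitary.** Let `M` be an
`n × n` integer matrix with `det M ≠ 0`, so that `G = coker M` and `H = coker Mᵀ` are
finite of cardinality `|det M|`.  Choose sections `t : G → ℤⁿ` and `s : H → ℤⁿ` of the
quotient maps, and set `U x y = exp(2πi · (s y)ᵀ M⁻¹ (t x)) / √|det M|`.  Then `U` is
unitary: `∑ y, U x y * conj (U x' y)` is `1` if `x = x'` and `0` otherwise. -/

theorem coker_dft_unitary {n : ℕ} (M : Matrix (Fin n) (Fin n) ℤ) (hM : M.det ≠ 0)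
    (t : ((Fin n → ℤ) ⧸ LinearMap.range M.mulVecLin) → (Fin n → ℤ))
    (s : ((Fin n → ℤ) ⧸ LinearMap.range Mᵀ.mulVecLin) → (Fin n → ℤ))
    (ht : ∀ x, Submodule.Quotient.mk (t x) = x)
    (hs : ∀ y, Submodule.Quotient.mk (s y) = y) :
    Nat.card ((Fin n → ℤ) ⧸ LinearMap.range M.mulVecLin) = M.det.natAbs ∧
    Nat.card ((Fin n → ℤ) ⧸ LinearMap.range Mᵀ.mulVecLin) = M.det.natAbs ∧
    ∀ x x' : (Fin n → ℤ) ⧸ LinearMap.range M.mulVecLin,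
      (∑ᶠ y : (Fin n → ℤ) ⧸ LinearMap.range Mᵀ.mulVecLin,
        (Complex.exp (2 * Real.pi * Complex.I * (cokerPairing M (t x) (s y) : ℚ)) /
            (Real.sqrt |(M.det : ℝ)| : ℝ)) *
        (starRingEnd ℂ) (Complex.exp (2 * Real.pi * Complex.I *
            (cokerPairing M (t x') (s y) : ℚ)) / (Real.sqrt |(M.det : ℝ)| : ℝ))) =
      if x = x' then 1 else 0 := by
  have hMT : Mᵀ.det ≠ 0 := by rwa [Matrix.det_transpose]
  have hcardH : Nat.card ((Fin n → ℤ) ⧸ LinearMap.range Mᵀ.mulVecLin) = M.det.natAbs := by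
    rw [card_coker_eq Mᵀ hMT, Matrix.det_transpose]
  refine ⟨card_coker_eq M hM, hcardH, ?_⟩
  intro x x'
  have hfin : Finite ((Fin n → ℤ) ⧸ LinearMap.range Mᵀ.mulVecLin) :=
    Nat.finite_of_card_ne_zero (by rw [hcardH]; simpa [Int.natAbs_ne_zero] using hM)
  have hfty : Fintype ((Fin n → ℤ) ⧸ LinearMap.range Mᵀ.mulVecLin) := Fintype.ofFinite _
  rw [finsum_eq_sum_of_fintype]
  set v : Fin n → ℤ := t x - t x' with hv
  set c : ℂ := (M.det.natAbs : ℂ) with hc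
  have hcne : c ≠ 0 := by
    simp [hc, Int.natAbs_ne_zero, hM]
  have hDD : ((Real.sqrt |(M.det : ℝ)| : ℝ) : ℂ) * ((Real.sqrt |(M.det : ℝ)| : ℝ) : ℂ) = c := by
    rw [← Complex.ofReal_mul, Real.mul_self_sqrt (abs_nonneg _), hc]
    have habs : ((M.det.natAbs : ℝ)) = |(M.det : ℝ)| := by
      rw [Nat.cast_natAbs, Int.cast_abs]
    rw [← habs]
    push_cast
    rfl
  have hterm : ∀ y, (Complex.exp (2 * Real.pi * Complex.I * (cokerPairing M (t x) (s y) : ℚ)) /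
            (Real.sqrt |(M.det : ℝ)| : ℝ)) *
        (starRingEnd ℂ) (Complex.exp (2 * Real.pi * Complex.I *
            (cokerPairing M (t x') (s y) : ℚ)) / (Real.sqrt |(M.det : ℝ)| : ℝ)) =
        E (cokerPairing M v (s y)) / c := by
    intro y
    have h1 : (starRingEnd ℂ) (E (cokerPairing M (t x') (s y)) /
        ((Real.sqrt |(M.det : ℝ)| : ℝ) : ℂ)) =
        E (-(cokerPairing M (t x') (s y))) / ((Real.sqrt |(M.det : ℝ)| : ℝ) : ℂ) := by
      rw [map_div₀, conj_E, Complex.conj_ofReal]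
    show E (cokerPairing M (t x) (s y)) / _ * (starRingEnd ℂ) (E (cokerPairing M (t x') (s y)) / _)
        = _
    rw [h1, div_mul_div_comm, hDD, ← E_add, hv, pairing_sub_left, sub_eq_add_neg]
  rw [Finset.sum_congr rfl (fun y _ => hterm y)]
  have hcong : ∀ Y Y' : Fin n → ℤ,
      (Submodule.Quotient.mk Y : (Fin n → ℤ) ⧸ LinearMap.range Mᵀ.mulVecLin) =
        Submodule.Quotient.mk Y' →
      E (cokerPairing M v Y) = E (cokerPairing M v Y') := by
    intro Y Y' h
    rw [Submodule.Quotient.eq] at h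
    obtain ⟨w, hw⟩ := h
    have hY : Y = Y' + Mᵀ.mulVec w := by
      have hw' : Mᵀ.mulVec w = Y - Y' := hw
      rw [hw']
      abel
    rw [hY, pairing_add_right, E_add, pairing_shift M hM, E_int, mul_one]
  by_cases hxx : x = x'
  · subst hxx
    rw [if_pos rfl]
    have hq : ∀ y, E (cokerPairing M v (s y)) = 1 := by
      intro y
      have : cokerPairing M v (s y) = 0 := by
        rw [hv, pairing_sub_left, sub_self]
      rw [this]
      exact_mod_cast E_int 0
    rw [Finset.sum_congr rfl (fun y _ => by rw [hq y])]
    rw [Finset.sum_const, Finset.card_univ, ← Nat.card_eq_fintype_card, hcardH]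
    rw [nsmul_eq_mul, hc]
    field_simp
    exact div_self hcne
  · rw [if_neg hxx]
    have hvnot : v ∉ LinearMap.range M.mulVecLin := by
      intro hmem
      exact hxx (by rw [← ht x, ← ht x', Submodule.Quotient.eq]; exact hmem)
    have hex : ∃ y₀, E (cokerPairing M v (s y₀)) ≠ 1 := by
      by_contra h
      push_neg at h
      have hallY : ∀ Y : Fin n → ℤ, ∃ k : ℤ, cokerPairing M v Y = k := by
        intro Y
        refine (E_eq_one_iff _).mp ?_
        rw [hcong Y (s (Submodule.Quotient.mk Y)) (by rw [hs])]
        exact h _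
      choose w hw using fun j => hallY (Pi.single j 1)
      apply hvnot
      refine ⟨w, ?_⟩
      have hsingle : ∀ j, cokerPairing M v (Pi.single j 1) =
          ((M.map ((↑) : ℤ → ℚ))⁻¹.mulVec (fun i => (v i : ℚ))) j := by
        intro j
        rw [cokerPairing]
        have : (fun i => ((Pi.single j 1 : Fin n → ℤ) i : ℚ)) = Pi.single j (1 : ℚ) := by
          funext i
          by_cases hij : i = j <;> simp [Pi.single_apply, hij]
        rw [this, single_dotProduct, one_mul]
      have hu : ((M.map ((↑) : ℤ → ℚ))⁻¹.mulVec (fun i => (v i : ℚ))) =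
          fun j => ((w j : ℤ) : ℚ) := by
        funext j
        rw [← hsingle j, hw j]
      have hQv : (M.map ((↑) : ℤ → ℚ)).mulVec (fun j => ((w j : ℤ) : ℚ)) =
          fun i => (v i : ℚ) := by
        rw [← hu, Matrix.mulVec_mulVec, Qmul M hM, Matrix.one_mulVec]
      rw [Matrix.mulVecLin_apply]
      funext i
      have h0 := congrFun hQv i
      rw [← castVec_mulVec] at h0
      have h2 : ((M.mulVec w) i : ℚ) = (v i : ℚ) := by simpa using h0
      exact_mod_cast h2
    obtain ⟨y₀, hy₀⟩ := hex
    have hS : (∑ y, E (cokerPairing M v (s y))) = 0 := by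
      have hshift : E (cokerPairing M v (s y₀)) * (∑ y, E (cokerPairing M v (s y))) =
          ∑ y, E (cokerPairing M v (s y)) := by
        rw [Finset.mul_sum]
        have hstep : ∀ y, E (cokerPairing M v (s y₀)) * E (cokerPairing M v (s y)) =
            E (cokerPairing M v (s (y₀ + y))) := by
          intro y
          rw [← E_add, ← pairing_add_right]
          exact (hcong (s (y₀ + y)) (s y₀ + s y)
            (by rw [hs, Submodule.Quotient.mk_add, hs, hs])).symm
        rw [Finset.sum_congr rfl (fun y _ => hstep y)]
        exact Fintype.sum_equiv (Equiv.addLeft y₀) _ _ (fun y => rfl)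
      have := sub_eq_zero.mpr hshift
      rw [← sub_one_mul] at this
      rcases mul_eq_zero.mp this with h | h
      · exact absurd (sub_eq_zero.mp h) hy₀
      · exact h
    rw [← Finset.sum_div, hS, zero_div]
end

section
/- For every n ∈ ℕ, the following identity of n(n+1) × n(n+1) integer matrices holds, where ⊗ denotes the Kronecker (tensor) product and M_A(n) = R(n) ⊗ R(n)ᵀ + L(n) ⊗ R(n)ᵀ + R(n) ⊗ L(n)ᵀ − L(n) ⊗ L(n)ᵀ: (B(n) ⊗ I_{n+1}) * M_A(n) * (I_{n+1} ⊗ B(n)ᵀ) = (I_n ⊗ B(n+1)ᵀ) * (R(n) ⊗ R(n)ᵀ − 2 · L(n) ⊗ L(n)ᵀ) * (B(n+1) ⊗ I_n). Since B(n) and B(n+1) are invertible over ℤ, consequently M_A(n) and R(n) ⊗ R(n)ᵀ − 2 · L(n) ⊗ L(n)ᵀ have isomorphic cokernels. -/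
open Matrix
open scoped Kronecker

/-- The `n × n` lower-triangular binomial matrix, `B(n)ᵢⱼ = C(i, j)`. -/
def binomMat (n : ℕ) : Matrix (Fin n) (Fin n) ℤ :=
  Matrix.of fun i j => (Nat.choose (i : ℕ) (j : ℕ) : ℤ)

/-- The `n × (n+1)` matrix `L(n)`: the identity followed by a null column. -/
def Lmat (n : ℕ) : Matrix (Fin n) (Fin (n + 1)) ℤ :=
  Matrix.of fun i j => if (j : ℕ) = (i : ℕ) then 1 else 0

/-- The `n × (n+1)` matrix `R(n)`: a null column followed by the identity. -/
def Rmat (n : ℕ) : Matrix (Fin n) (Fin (n + 1)) ℤ :=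
  Matrix.of fun i j => if (j : ℕ) = (i : ℕ) + 1 then 1 else 0

/-- The Kasteleyn–Percus matrix of the Aztec diamond of order `n`:
`M_A(n) = R(n) ⊗ R(n)ᵀ + L(n) ⊗ R(n)ᵀ + R(n) ⊗ L(n)ᵀ - L(n) ⊗ L(n)ᵀ`. -/
def aztecMat (n : ℕ) : Matrix (Fin n × Fin (n + 1)) (Fin (n + 1) × Fin n) ℤ :=
  Rmat n ⊗ₖ (Rmat n)ᵀ + Lmat n ⊗ₖ (Rmat n)ᵀ + Rmat n ⊗ₖ (Lmat n)ᵀ - Lmat n ⊗ₖ (Lmat n)ᵀ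

/-! Pascal's rule says that `B(n)` intertwines the shifts: `B(n) L(n) = L(n) B(n+1)` and
`B(n) R(n) = (R(n) - L(n)) B(n+1)`. Writing `X = R(n) B(n+1)` and `Y = L(n) B(n+1)`, the
conjugated Kasteleyn–Percus matrix becomes
`(X - Y) ⊗ (X - Y)ᵀ + Y ⊗ (X - Y)ᵀ + (X - Y) ⊗ Yᵀ - Y ⊗ Yᵀ = X ⊗ Xᵀ - 2 Y ⊗ Yᵀ`.
Multiplying by unimodular matrices on both sides does not change the cokernel. -/

namespace Matrix

variable {α R k l m n p : Type*}

theorem sub_kronecker [NonUnitalNonAssocRing α] (A₁ A₂ : Matrix l m α) (B : Matrix n p α) :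
    (A₁ - A₂) ⊗ₖ B = A₁ ⊗ₖ B - A₂ ⊗ₖ B := by
  ext; simp [sub_mul]

theorem kronecker_sub [NonUnitalNonAssocRing α] (A : Matrix l m α) (B₁ B₂ : Matrix n p α) :
    A ⊗ₖ (B₁ - B₂) = A ⊗ₖ B₁ - A ⊗ₖ B₂ := by
  ext; simp [mul_sub]

abbrev coker [CommRing R] [Fintype m] (M : Matrix k m R) : Type _ :=
  (k → R) ⧸ LinearMap.range M.mulVecLin

theorem range_mulVecLin_mul_mul [CommRing R] [Fintype k] [Fintype m] [DecidableEq m]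
    (P : Matrix k k R) (M : Matrix k m R) {Q : Matrix m m R} (hQ : IsUnit Q) :
    LinearMap.range (P * M * Q).mulVecLin = (LinearMap.range M.mulVecLin).map P.mulVecLin := by
  have hQ_top : LinearMap.range Q.mulVecLin = ⊤ :=
    LinearMap.range_eq_top.2 (mulVec_surjective_iff_isUnit.2 hQ)
  rw [mulVecLin_mul, mulVecLin_mul, LinearMap.range_comp_of_range_eq_top _ hQ_top,
    LinearMap.range_comp]

theorem nonempty_coker_mul_mul_equiv [CommRing R] [Fintype k] [Fintype m] [DecidableEq k]
    [DecidableEq m] {P : Matrix k k R} {Q : Matrix m m R} (hP : IsUnit P) (hQ : IsUnit Q)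
    (M : Matrix k m R) : Nonempty (coker (P * M * Q) ≃ₗ[R] coker M) :=
  ⟨(Submodule.Quotient.equiv _ _ (P.toLinearEquiv' hP.invertible)
    (range_mulVecLin_mul_mul P M hQ).symm).symm⟩

end Matrix

theorem isUnit_binomMat (n : ℕ) : IsUnit (binomMat n) := by
  have hlower : (binomMat n).IsLowerTriangular := fun i j hij => by
    simp [binomMat, Nat.choose_eq_zero_of_lt (show (i : ℕ) < j from hij)]
  rw [isUnit_iff_isUnit_det, det_of_isLowerTriangular _ hlower]
  simp [binomMat]

section shifts

variable {n : ℕ} {m : Type*}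

theorem Lmat_mul_apply (A : Matrix (Fin (n + 1)) m ℤ) (i : Fin n) (j : m) :
    (Lmat n * A) i j = A i.castSucc j := by
  have hval : ∀ k : Fin (n + 1), (k : ℕ) = i ↔ k = i.castSucc := fun k => by simp [Fin.ext_iff]
  simp [mul_apply, Lmat, hval]

theorem Rmat_mul_apply (A : Matrix (Fin (n + 1)) m ℤ) (i : Fin n) (j : m) :
    (Rmat n * A) i j = A i.succ j := by
  simp [mul_apply, Rmat, ← Fin.val_succ, ← Fin.ext_iff]

theorem mul_Lmat_apply_castSucc (A : Matrix m (Fin n) ℤ) (i : m) (j : Fin n) :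
    (A * Lmat n) i j.castSucc = A i j := by
  simp [mul_apply, Lmat, ← Fin.ext_iff]

theorem mul_Lmat_apply_last (A : Matrix m (Fin n) ℤ) (i : m) :
    (A * Lmat n) i (Fin.last n) = 0 := by
  simp [mul_apply, Lmat, Fin.val_last, Fin.is_lt, ne_of_gt]

theorem mul_Rmat_apply_succ (A : Matrix m (Fin n) ℤ) (i : m) (j : Fin n) :
    (A * Rmat n) i j.succ = A i j := by
  simp [mul_apply, Rmat, ← Fin.ext_iff]

theorem mul_Rmat_apply_zero (A : Matrix m (Fin n) ℤ) (i : m) :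
    (A * Rmat n) i 0 = 0 := by
  simp [mul_apply, Rmat]

end shifts

theorem binomMat_mul_Lmat (n : ℕ) : binomMat n * Lmat n = Lmat n * binomMat (n + 1) := by
  ext i j
  induction j using Fin.lastCases with
  | last => simp [mul_Lmat_apply_last, Lmat_mul_apply, binomMat, Nat.choose_eq_zero_of_lt]
  | cast j => simp [mul_Lmat_apply_castSucc, Lmat_mul_apply, binomMat]

theorem binomMat_mul_Rmat (n : ℕ) :
    binomMat n * Rmat n = Rmat n * binomMat (n + 1) - Lmat n * binomMat (n + 1) := by
  ext i j
  induction j using Fin.cases with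
  | zero => simp [mul_Rmat_apply_zero, Rmat_mul_apply, Lmat_mul_apply, binomMat]
  | succ j =>
    simp [mul_Rmat_apply_succ, Rmat_mul_apply, Lmat_mul_apply, binomMat, Nat.choose_succ_succ]

theorem binomMat_kronecker_conj_aztecMat (n : ℕ) :
    (binomMat n ⊗ₖ (1 : Matrix (Fin (n + 1)) (Fin (n + 1)) ℤ)) * aztecMat n *
        ((1 : Matrix (Fin (n + 1)) (Fin (n + 1)) ℤ) ⊗ₖ (binomMat n)ᵀ) =
      ((1 : Matrix (Fin n) (Fin n) ℤ) ⊗ₖ (binomMat (n + 1))ᵀ) *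
        (Rmat n ⊗ₖ (Rmat n)ᵀ - 2 • (Lmat n ⊗ₖ (Lmat n)ᵀ)) *
        (binomMat (n + 1) ⊗ₖ (1 : Matrix (Fin n) (Fin n) ℤ)) := by
  set X := Rmat n * binomMat (n + 1)
  set Y := Lmat n * binomMat (n + 1)
  have lhs : (binomMat n ⊗ₖ (1 : Matrix (Fin (n + 1)) (Fin (n + 1)) ℤ)) * aztecMat n *
        ((1 : Matrix (Fin (n + 1)) (Fin (n + 1)) ℤ) ⊗ₖ (binomMat n)ᵀ) =
      (X - Y) ⊗ₖ (X - Y)ᵀ + Y ⊗ₖ (X - Y)ᵀ + (X - Y) ⊗ₖ Yᵀ - Y ⊗ₖ Yᵀ := by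
    simp only [aztecMat, Matrix.mul_add, Matrix.mul_sub, Matrix.add_mul, Matrix.sub_mul,
      ← mul_kronecker_mul, Matrix.one_mul, Matrix.mul_one, ← transpose_mul,
      binomMat_mul_Rmat, binomMat_mul_Lmat, X, Y]
  have rhs : ((1 : Matrix (Fin n) (Fin n) ℤ) ⊗ₖ (binomMat (n + 1))ᵀ) *
        (Rmat n ⊗ₖ (Rmat n)ᵀ - 2 • (Lmat n ⊗ₖ (Lmat n)ᵀ)) *
        (binomMat (n + 1) ⊗ₖ (1 : Matrix (Fin n) (Fin n) ℤ)) = X ⊗ₖ Xᵀ - 2 • (Y ⊗ₖ Yᵀ) := by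
    simp only [Matrix.mul_sub, Matrix.sub_mul, Matrix.mul_smul, Matrix.smul_mul,
      ← mul_kronecker_mul, Matrix.one_mul, Matrix.mul_one, transpose_mul, X, Y]
  rw [lhs, rhs]
  simp only [sub_kronecker, kronecker_sub, transpose_sub]
  abel

/-- **Diagonalizing the Aztec-diamond Kasteleyn–Percus matrix.**
`(B(n) ⊗ I) * M_A(n) * (I ⊗ B(n)ᵀ) = (I ⊗ B(n+1)ᵀ) * (R(n) ⊗ R(n)ᵀ - 2 L(n) ⊗ L(n)ᵀ) *
(B(n+1) ⊗ I)`; since `B(n)` and `B(n+1)` are invertible over `ℤ`, consequently `M_A(n)`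
and `R(n) ⊗ R(n)ᵀ - 2 L(n) ⊗ L(n)ᵀ` have isomorphic cokernels. -/
theorem aztecMat_equiv (n : ℕ) :
    ((binomMat n ⊗ₖ (1 : Matrix (Fin (n + 1)) (Fin (n + 1)) ℤ)) * aztecMat n *
        ((1 : Matrix (Fin (n + 1)) (Fin (n + 1)) ℤ) ⊗ₖ (binomMat n)ᵀ) =
      ((1 : Matrix (Fin n) (Fin n) ℤ) ⊗ₖ (binomMat (n + 1))ᵀ) *
        (Rmat n ⊗ₖ (Rmat n)ᵀ - 2 • (Lmat n ⊗ₖ (Lmat n)ᵀ)) *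
        (binomMat (n + 1) ⊗ₖ (1 : Matrix (Fin n) (Fin n) ℤ))) ∧
    Nonempty (((Fin n × Fin (n + 1) → ℤ) ⧸ LinearMap.range (aztecMat n).mulVecLin) ≃ₗ[ℤ]
      ((Fin n × Fin (n + 1) → ℤ) ⧸
        LinearMap.range (Rmat n ⊗ₖ (Rmat n)ᵀ - 2 • (Lmat n ⊗ₖ (Lmat n)ᵀ)).mulVecLin)) := by
  have hB := isUnit_binomMat n
  have hB' := isUnit_binomMat (n + 1)
  have hconj := binomMat_kronecker_conj_aztecMat n
  obtain ⟨e⟩ := nonempty_coker_mul_mul_equiv (hB.kronecker isUnit_one)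
    (isUnit_one.kronecker ((isUnit_transpose _).2 hB)) (aztecMat n)
  obtain ⟨e'⟩ := nonempty_coker_mul_mul_equiv (isUnit_one.kronecker ((isUnit_transpose _).2 hB'))
    (hB'.kronecker isUnit_one) (Rmat n ⊗ₖ (Rmat n)ᵀ - 2 • (Lmat n ⊗ₖ (Lmat n)ᵀ))
  rw [hconj] at e
  exact ⟨hconj, ⟨e.symm.trans e'⟩⟩
end

section
/- For every n ∈ ℕ, the n(n+1) × n(n+1) integer matrix M_A(n) = R(n) ⊗ R(n)ᵀ + L(n) ⊗ R(n)ᵀ + R(n) ⊗ L(n)ᵀ − L(n) ⊗ L(n)ᵀ has cokernel coker M_A(n) ≅ ℤ/2ℤ ⊕ ℤ/4ℤ ⊕ ⋯ ⊕ ℤ/2^n ℤ, the direct sum of the cyclic groups ℤ/2^k ℤ for k = 1, …, n. -/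
/-!
Send the cell `(i, p)` to the power series `X^i (1 - X)^(-(i+1)) (2X - 1)^p` over `ℤ`. With
`s = X / (1 - X)` and `t = 2X - 1` this is `(1 + s) s^i t^p`, and `(1 + s) t + 1 - s = 0`. Column
`(q, r)` of `M_A(n)` with `q ≥ 1` is sent to `(1 + s) s^(q-1) t^r ((1 + s) t + 1 - s)`, up to a
multiple of `s^n` (hence of `X^n`) from the truncation at the last row, while column `(0, r)` is sent
to `(1 + s) t^r (t - 1) = -2 (2X - 1)^r`.

Keep the first `n` coefficients: this gives `Ψ : ℤ^(n(n+1)) → ℤ^n`. On the cells `(i, 0)` it is a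
unitriangular matrix, and the columns with `q ≥ 1` express each cell in terms of the cells `(i, 0)`,
so `ker Ψ ⊆ im M_A(n)`. Since `(2X)^k = ((2X - 1) + 1)^k`, the images of the columns `(0, r)` span
exactly `{y | 2^(k+1) ∣ y k for all k}`. So reducing coordinate `k` of `Ψ` modulo `2^(k+1)` gives a
surjection whose kernel is `im M_A(n)`.
-/

open Matrix
open scoped Kronecker

open PowerSeries

/-- `Pi.single (i, p) 1`, extended by zero to `i ≥ n` so that the column formulas below need no
case split at the last row. -/
def cellVec (n i : ℕ) (p : Fin (n + 1)) : Fin n × Fin (n + 1) → ℤ :=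
  fun c => if (c.1 : ℕ) = i ∧ c.2 = p then 1 else 0

lemma cellVec_eq_single {n : ℕ} (i : Fin n) (p : Fin (n + 1)) :
    cellVec n i p = Pi.single (i, p) 1 := by
  ext ⟨j, q⟩
  simp [cellVec, Pi.single_apply, Prod.ext_iff, Fin.ext_iff]

lemma cellVec_eq_zero {n i : ℕ} (h : n ≤ i) (p : Fin (n + 1)) : cellVec n i p = 0 := by
  ext ⟨j, q⟩
  simp only [cellVec, Pi.zero_apply, ite_eq_right_iff]
  omega

lemma aztecMat_mulVec_single_zero {n : ℕ} (r : Fin n) :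
    aztecMat n *ᵥ Pi.single (0, r) 1 = cellVec n 0 r.succ - cellVec n 0 r.castSucc := by
  ext ⟨i, p⟩
  simp only [mulVec_single_one, col_apply, aztecMat, Lmat, Rmat, cellVec, Matrix.sub_apply,
    Matrix.add_apply, kroneckerMap_apply, transpose_apply, of_apply, Pi.sub_apply, Fin.ext_iff,
    Fin.val_succ, Fin.val_castSucc, Fin.val_zero]
  grind

lemma aztecMat_mulVec_single_succ {n : ℕ} (a r : Fin n) :
    aztecMat n *ᵥ Pi.single (a.succ, r) 1 =
      cellVec n a r.succ + cellVec n (a + 1 : ℕ) r.succ + cellVec n a r.castSucc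
        - cellVec n (a + 1 : ℕ) r.castSucc := by
  ext ⟨i, p⟩
  simp only [mulVec_single_one, col_apply, aztecMat, Lmat, Rmat, cellVec, Matrix.sub_apply,
    Matrix.add_apply, kroneckerMap_apply, transpose_apply, of_apply, Pi.sub_apply, Pi.add_apply,
    Fin.ext_iff, Fin.val_succ, Fin.val_castSucc]
  grind

noncomputable def cellSeries (i p : ℕ) : ℤ⟦X⟧ := X ^ i * mk 1 ^ (i + 1) * (2 * X - 1) ^ p

lemma cellSeries_relation (i p : ℕ) :
    cellSeries i (p + 1) + cellSeries (i + 1) (p + 1) + cellSeries i p - cellSeries (i + 1) p =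
      0 := by
  unfold cellSeries
  linear_combination (-2 * X ^ (i + 1) * mk 1 ^ (i + 1) * (2 * X - 1) ^ p) *
    mk_one_mul_one_sub_eq_one ℤ

lemma cellSeries_zero_succ_sub (p : ℕ) :
    cellSeries 0 (p + 1) - cellSeries 0 p = -2 * (2 * X - 1) ^ p := by
  unfold cellSeries
  linear_combination (-2 * (2 * X - 1) ^ p) * mk_one_mul_one_sub_eq_one ℤ

lemma two_pow_dvd_coeff_two_mul_X_sub_one_pow (k r : ℕ) :
    (2 : ℤ) ^ k ∣ coeff k ((2 * X - 1 : ℤ⟦X⟧) ^ r) := by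
  have : (2 * X - 1 : ℤ⟦X⟧) ^ r = rescale 2 ((X - 1) ^ r) := by
    simp [rescale_X, map_ofNat]
  rw [this, coeff_rescale]
  exact dvd_mul_right _ _

lemma C_two_pow_succ_mul_X_pow_eq_sum (k : ℕ) :
    (C (2 ^ (k + 1)) * X ^ k : ℤ⟦X⟧) =
      ∑ r ∈ Finset.range (k + 1), (k.choose r : ℤ) • (2 * (2 * X - 1) ^ r) := by
  calc (C (2 ^ (k + 1)) * X ^ k : ℤ⟦X⟧) = 2 * ((2 * X - 1) + 1) ^ k := by
        simp only [pow_succ, eq_intCast, Int.cast_mul, Int.cast_pow, Int.cast_ofNat,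
          sub_add_cancel, mul_pow]
        ring
    _ = _ := by
        rw [add_pow, Finset.mul_sum]
        refine Finset.sum_congr rfl fun r _ => ?_
        simp only [one_pow, mul_one, zsmul_eq_mul, Int.cast_natCast]
        ring

section Truncation

variable {R : Type*} [Semiring R]

noncomputable def truncCoeff (n : ℕ) : R⟦X⟧ →ₗ[R] (Fin n → R) := LinearMap.pi fun k => coeff k

@[simp]
lemma truncCoeff_apply (n : ℕ) (f : R⟦X⟧) (k : Fin n) : truncCoeff n f k = coeff k f := rfl

lemma truncCoeff_X_pow_mul {n i : ℕ} (h : n ≤ i) (f : R⟦X⟧) : truncCoeff n (X ^ i * f) = 0 := by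
  ext k
  simp [coeff_X_pow_mul', show ¬ i ≤ k by omega]

end Truncation

section Reduction

variable {ι : Type*} (m : ι → ℕ)

noncomputable def reduceMod : (ι → ℤ) →ₗ[ℤ] ((i : ι) → ZMod (m i)) :=
  LinearMap.pi fun i => (Int.castAddHom (ZMod (m i))).toIntLinearMap ∘ₗ LinearMap.proj i

lemma surjective_reduceMod : Function.Surjective (reduceMod m) := fun y =>
  ⟨fun i => (y i).cast, funext fun i => by simp [reduceMod]⟩

lemma mem_ker_reduceMod {y : ι → ℤ} :
    y ∈ LinearMap.ker (reduceMod m) ↔ ∀ i, (m i : ℤ) ∣ y i := by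
  simp [reduceMod, funext_iff, ZMod.intCast_zmod_eq_zero_iff_dvd]

end Reduction

noncomputable def cellMap (n : ℕ) : (Fin n × Fin (n + 1) → ℤ) →ₗ[ℤ] (Fin n → ℤ) :=
  truncCoeff n ∘ₗ Fintype.linearCombination ℤ fun c => cellSeries c.1 c.2

noncomputable def firstColumn (n : ℕ) : (Fin n → ℤ) →ₗ[ℤ] (Fin n × Fin (n + 1) → ℤ) :=
  Fintype.linearCombination ℤ fun i => Pi.single (i, 0) 1

lemma cellMap_cellVec (n i : ℕ) (p : Fin (n + 1)) :
    cellMap n (cellVec n i p) = truncCoeff n (cellSeries i p) := by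
  by_cases h : i < n
  · rw [show i = (⟨i, h⟩ : Fin n) from rfl, cellVec_eq_single]
    simp [cellMap, Fintype.linearCombination_apply_single]
  · rw [cellVec_eq_zero (not_lt.1 h), map_zero, cellSeries, mul_assoc,
      truncCoeff_X_pow_mul (not_lt.1 h)]

lemma cellMap_aztecMat_mulVec_single_succ {n : ℕ} (a r : Fin n) :
    cellMap n (aztecMat n *ᵥ Pi.single (a.succ, r) 1) = 0 := by
  simp only [aztecMat_mulVec_single_succ, map_add, map_sub, cellMap_cellVec, Fin.val_succ,
    Fin.val_castSucc]
  rw [← map_add, ← map_add, ← map_sub, cellSeries_relation, map_zero]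

lemma cellMap_aztecMat_mulVec_single_zero {n : ℕ} (r : Fin n) :
    cellMap n (aztecMat n *ᵥ Pi.single (0, r) 1) = truncCoeff n (-2 * (2 * X - 1) ^ (r : ℕ)) := by
  simp only [aztecMat_mulVec_single_zero, map_sub, cellMap_cellVec, Fin.val_succ,
    Fin.val_castSucc]
  rw [← map_sub, cellSeries_zero_succ_sub]

lemma bijective_cellMap_comp_firstColumn (n : ℕ) :
    Function.Bijective (cellMap n ∘ₗ firstColumn n) := by
  set T := LinearMap.toMatrix' (cellMap n ∘ₗ firstColumn n)
  have hT (k i : Fin n) : T k i = coeff k (X ^ (i : ℕ) * mk 1 ^ ((i : ℕ) + 1) : ℤ⟦X⟧) := by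
    simp [T, LinearMap.toMatrix'_apply, firstColumn, Fintype.linearCombination_apply_single,
      ← cellVec_eq_single, cellMap_cellVec, cellSeries]
  have hlower : T.IsLowerTriangular := fun k i hik => by
    rw [OrderDual.toDual_lt_toDual, Fin.lt_def] at hik
    rw [hT, coeff_X_pow_mul', if_neg (not_le.2 hik)]
  have hdiag (i : Fin n) : T i i = 1 := by
    rw [hT, coeff_X_pow_mul', if_pos le_rfl, Nat.sub_self, coeff_zero_eq_constantCoeff, map_pow]
    simp
  have hunit : IsUnit T := by
    simp [isUnit_iff_isUnit_det, det_of_isLowerTriangular _ hlower, hdiag]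
  have hf : ⇑(cellMap n ∘ₗ firstColumn n) = T.mulVec := by
    rw [← Matrix.toLin'_toMatrix' (cellMap n ∘ₗ firstColumn n)]
    rfl
  rw [hf]
  exact ⟨mulVec_injective_of_isUnit hunit, mulVec_surjective_iff_isUnit.2 hunit⟩

lemma surjective_cellMap (n : ℕ) : Function.Surjective (cellMap n) :=
  .of_comp (bijective_cellMap_comp_firstColumn n).2

lemma range_inf_ker_sup_range_firstColumn_eq_top (n : ℕ) :
    LinearMap.range (aztecMat n).mulVecLin ⊓ LinearMap.ker (cellMap n) ⊔
      LinearMap.range (firstColumn n) = ⊤ := by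
  set S := LinearMap.range (aztecMat n).mulVecLin ⊓ LinearMap.ker (cellMap n) ⊔
    LinearMap.range (firstColumn n)
  have hcol (a r : Fin n) : aztecMat n *ᵥ Pi.single (a.succ, r) 1 ∈ S :=
    Submodule.mem_sup_left ⟨⟨_, rfl⟩, cellMap_aztecMat_mulVec_single_succ a r⟩
  have hzero (i : ℕ) (p : Fin (n + 1)) (hi : n ≤ i) : cellVec n i p ∈ S := by
    rw [cellVec_eq_zero hi]
    exact S.zero_mem
  have hcell (p : Fin (n + 1)) (i : ℕ) : cellVec n i p ∈ S := by
    induction p using Fin.induction generalizing i with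
    | zero =>
      rcases le_or_gt n i with hi | hi
      · exact hzero i 0 hi
      refine Submodule.mem_sup_right ⟨Pi.single ⟨i, hi⟩ 1, ?_⟩
      simp [firstColumn, Fintype.linearCombination_apply_single, cellVec_eq_single ⟨i, hi⟩]
    | succ r ih =>
      rcases le_or_gt n i with hi | hi
      · exact hzero i _ hi
      refine Nat.decreasingInduction (motive := fun i _ => cellVec n i r.succ ∈ S)
        (fun i hi hnext => ?_) (hzero n _ le_rfl) hi.le
      have hrel : cellVec n i r.succ = aztecMat n *ᵥ Pi.single ((⟨i, hi⟩ : Fin n).succ, r) 1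
          - cellVec n (i + 1) r.succ - cellVec n i r.castSucc + cellVec n (i + 1) r.castSucc := by
        rw [aztecMat_mulVec_single_succ]
        abel
      rw [hrel]
      exact S.add_mem (S.sub_mem (S.sub_mem (hcol _ r) hnext) (ih i)) (ih (i + 1))
  rw [Submodule.eq_top_iff']
  intro v
  rw [pi_eq_sum_univ' v]
  refine Submodule.sum_mem _ fun c _ => Submodule.smul_mem _ _ ?_
  rw [← cellVec_eq_single]
  exact hcell c.2 c.1

lemma ker_cellMap_le_range_aztecMat (n : ℕ) :
    LinearMap.ker (cellMap n) ≤ LinearMap.range (aztecMat n).mulVecLin := by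
  intro v hv
  obtain ⟨w, hw, _, ⟨c, rfl⟩, rfl⟩ := Submodule.mem_sup.1
    (range_inf_ker_sup_range_firstColumn_eq_top n ▸ Submodule.mem_top (x := v))
  have hc : c = 0 := (bijective_cellMap_comp_firstColumn n).1 <| by
    simpa [LinearMap.mem_ker.1 hw.2] using hv
  simpa [hc] using hw.1

lemma range_aztecMat_le_ker_reduceMod_comp_cellMap (n : ℕ) :
    LinearMap.range (aztecMat n).mulVecLin ≤
      LinearMap.ker (reduceMod (fun k : Fin n => 2 ^ ((k : ℕ) + 1)) ∘ₗ cellMap n) := by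
  rw [range_mulVecLin, Submodule.span_le]
  rintro _ ⟨⟨q, r⟩, rfl⟩
  induction q using Fin.cases with
  | zero =>
    rw [SetLike.mem_coe, ← mulVec_single_one, LinearMap.ker_comp, Submodule.mem_comap,
      mem_ker_reduceMod, cellMap_aztecMat_mulVec_single_zero]
    intro k
    rw [truncCoeff_apply, show (-2 : ℤ⟦X⟧) = C (-2) by simp, coeff_C_mul]
    push_cast
    rw [pow_succ']
    exact mul_dvd_mul (dvd_neg.2 dvd_rfl) (two_pow_dvd_coeff_two_mul_X_sub_one_pow k r)
  | succ a =>
    rw [SetLike.mem_coe, ← mulVec_single_one, LinearMap.mem_ker, LinearMap.comp_apply,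
      cellMap_aztecMat_mulVec_single_succ, map_zero]

lemma ker_reduceMod_le_map_range_aztecMat (n : ℕ) :
    LinearMap.ker (reduceMod (fun k : Fin n => 2 ^ ((k : ℕ) + 1))) ≤
      (LinearMap.range (aztecMat n).mulVecLin).map (cellMap n) := by
  set S := (LinearMap.range (aztecMat n).mulVecLin).map (cellMap n)
  have hrel (r : ℕ) (hr : r < n) : truncCoeff n (2 * (2 * X - 1) ^ r) ∈ S := by
    have h := cellMap_aztecMat_mulVec_single_zero (⟨r, hr⟩ : Fin n)
    rw [neg_mul, map_neg] at h
    exact neg_mem_iff.1 (h ▸ Submodule.mem_map_of_mem (LinearMap.mem_range_self _ _))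
  have hgen (k : Fin n) : truncCoeff n (C (2 ^ ((k : ℕ) + 1)) * X ^ (k : ℕ)) ∈ S := by
    rw [C_two_pow_succ_mul_X_pow_eq_sum, map_sum]
    refine Submodule.sum_mem _ fun r hr => ?_
    rw [map_zsmul]
    exact Submodule.smul_mem _ _ (hrel r ((Finset.mem_range.1 hr).trans_le k.isLt))
  intro y hy
  choose z hz using (mem_ker_reduceMod _).1 hy
  have hsum : y = ∑ k, z k • truncCoeff n (C (2 ^ ((k : ℕ) + 1)) * X ^ (k : ℕ)) := by
    ext j
    simp only [Finset.sum_apply, Pi.smul_apply, truncCoeff_apply, coeff_C_mul_X_pow, smul_eq_mul,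
      Fin.val_inj, mul_ite, mul_zero, Finset.sum_ite_eq, Finset.mem_univ, if_true, hz]
    push_cast
    ring
  rw [hsum]
  exact Submodule.sum_mem _ fun k _ => Submodule.smul_mem _ _ (hgen k)

/-- **The Kasteleyn cokernel of the Aztec diamond.** For every `n`,
`coker M_A(n) ≅ ℤ/2ℤ ⊕ ℤ/4ℤ ⊕ ⋯ ⊕ ℤ/2ⁿℤ`. -/
theorem coker_aztecMat (n : ℕ) :
    Nonempty (((Fin n × Fin (n + 1) → ℤ) ⧸ LinearMap.range (aztecMat n).mulVecLin) ≃ₗ[ℤ]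
      ((k : Fin n) → ZMod (2 ^ ((k : ℕ) + 1)))) := by
  set F := reduceMod (fun k : Fin n => 2 ^ ((k : ℕ) + 1)) ∘ₗ cellMap n
  have hF : LinearMap.range (aztecMat n).mulVecLin = LinearMap.ker F := by
    refine le_antisymm (range_aztecMat_le_ker_reduceMod_comp_cellMap n) ?_
    calc LinearMap.ker F
        = (LinearMap.ker (reduceMod _)).comap (cellMap n) := LinearMap.ker_comp _ _
      _ ≤ ((LinearMap.range (aztecMat n).mulVecLin).map (cellMap n)).comap (cellMap n) :=
          Submodule.comap_mono (ker_reduceMod_le_map_range_aztecMat n)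
      _ = LinearMap.range (aztecMat n).mulVecLin ⊔ LinearMap.ker (cellMap n) :=
          Submodule.comap_map_eq _ _
      _ = LinearMap.range (aztecMat n).mulVecLin :=
          sup_eq_left.2 (ker_cellMap_le_range_aztecMat n)
  have hsurj : Function.Surjective F := (surjective_reduceMod _).comp (surjective_cellMap n)
  exact ⟨(Submodule.quotEquivOfEq _ _ hF).trans (F.quotKerEquivOfSurjective hsurj)⟩
end

section
/- For every n ∈ ℕ, the determinant of the n(n+1) × n(n+1) integer matrix M_A(n) = R(n) ⊗ R(n)ᵀ + L(n) ⊗ R(n)ᵀ + R(n) ⊗ L(n)ᵀ − L(n) ⊗ L(n)ᵀ satisfies |det M_A(n)| = 2^{n(n+1)/2}, in accordance with the fact that the Aztec diamond of order n has exactly 2^{n(n+1)/2} domino tilings. -/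
open Matrix
open scoped Kronecker

/- ### Auxiliary matrices -/

def Pm (n : ℕ) : Matrix (Fin (n + 1)) (Fin n) ℤ := (Rmat n)ᵀ - (Lmat n)ᵀ
def Qm (n : ℕ) : Matrix (Fin (n + 1)) (Fin n) ℤ := (Rmat n)ᵀ + (Lmat n)ᵀ
def Xp (n : ℕ) : Matrix (Fin n) (Fin n) ℤ :=
  Matrix.of fun c a => if (a : ℕ) = (c : ℕ) then 1 else if (a : ℕ) < (c : ℕ) then 2 else 0
def Jm (n : ℕ) : Matrix (Fin (n + 1)) (Fin (n + 1)) ℤ :=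
  Matrix.of fun k k' => if (k' : ℕ) = (k : ℕ) + 1 then 1 else 0
def Em (n : ℕ) : Matrix (Fin (n + 1)) (Fin n) ℤ :=
  Matrix.of fun j _ => if (j : ℕ) = n then 1 else 0
def Um (n : ℕ) : Matrix (Fin (n + 1) × Fin n) (Fin (n + 1) × Fin n) ℤ :=
  ∑ s ∈ Finset.range (n + 1), ((Jm n) ^ s) ⊗ₖ ((Xp n) ^ s)
def hD (n : ℕ) (s : ℕ) (a : Fin n) : ℤ := ∑ c, ((Xp n) ^ s) c a
def DD (n : ℕ) (s t : ℕ) : ℤ :=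
  ∑ j ∈ Finset.range n, 2 ^ j * (s.choose j : ℤ) * (t.choose j : ℤ)

lemma fin_sum_ite {m : ℕ} (f : Fin m → ℤ) (k : ℕ) :
    (∑ c : Fin m, if (c : ℕ) = k then f c else 0) = if h : k < m then f ⟨k, h⟩ else 0 := by
  split_ifs with h
  · rw [Finset.sum_eq_single (⟨k, h⟩ : Fin m)]
    · simp
    · intro b _ hb
      rw [if_neg]
      exact fun hc => hb (Fin.ext hc)
    · simp
  · apply Finset.sum_eq_zero
    intro c _
    rw [if_neg]
    exact fun hc => h (hc ▸ c.isLt)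

lemma sum_ite_eq_val {m : ℕ} (f : Fin m → ℤ) (k : ℕ) :
    (∑ c : Fin m, if k = (c : ℕ) then f c else 0) = if h : k < m then f ⟨k, h⟩ else 0 := by
  rw [← fin_sum_ite]
  exact Finset.sum_congr rfl fun c _ => if_congr eq_comm rfl rfl

lemma sum_ite_eq_succ {m : ℕ} (f : Fin m → ℤ) (k : ℕ) :
    (∑ c : Fin m, if k = (c : ℕ) + 1 then f c else 0)
      = if h : k - 1 < m ∧ 1 ≤ k then f ⟨k - 1, h.1⟩ else 0 := by
  rcases k with _ | k'
  · simp
  · have h1 : ∀ c : Fin m, (if k' + 1 = (c : ℕ) + 1 then f c else 0)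
        = if (c : ℕ) = k' then f c else 0 := by
      intro c
      congr 1
      simp [eq_comm]
    rw [Finset.sum_congr rfl (fun c _ => h1 c), fin_sum_ite]
    by_cases h : k' < m
    · rw [dif_pos h, dif_pos ⟨by omega, by omega⟩]
      rfl
    · rw [dif_neg h, dif_neg (by omega)]

lemma aztec_decomp (n : ℕ) : aztecMat n = Lmat n ⊗ₖ Pm n + Rmat n ⊗ₖ Qm n := by
  ext ⟨i, j⟩ ⟨k, l⟩
  simp [aztecMat, Pm, Qm, Matrix.kroneckerMap_apply]
  ring

lemma Jpow (n s : ℕ) :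
    (Jm n) ^ s = Matrix.of fun (k k' : Fin (n + 1)) =>
      if (k' : ℕ) = (k : ℕ) + s then 1 else 0 := by
  induction s with
  | zero =>
    ext k k'
    simp [Matrix.one_apply, Fin.ext_iff, eq_comm]
  | succ s ih =>
    ext k k'
    rw [pow_succ, ih]
    simp only [Matrix.mul_apply, Matrix.of_apply, Jm]
    have h1 : ∀ c : Fin (n + 1),
        (if (c : ℕ) = (k : ℕ) + s then (1 : ℤ) else 0) *
          (if (k' : ℕ) = (c : ℕ) + 1 then 1 else 0)
        = if (c : ℕ) = (k : ℕ) + s then (if (k' : ℕ) = (k : ℕ) + s + 1 then 1 else 0)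
          else 0 := by
      intro c
      by_cases hc : (c : ℕ) = (k : ℕ) + s
      · simp [hc]
      · simp [hc]
    rw [Finset.sum_congr rfl (fun c _ => h1 c), fin_sum_ite]
    have hk' := k'.isLt
    by_cases h : (k : ℕ) + s < n + 1
    · rw [dif_pos h]
      simp [Nat.add_assoc]
    · rw [dif_neg h, if_neg (by omega)]

lemma Jpow_top (n : ℕ) : (Jm n) ^ (n + 1) = 0 := by
  rw [Jpow]
  ext k k'
  have := k'.isLt
  rw [Matrix.of_apply, if_neg (by omega)]
  rfl

lemma LJpow (n m : ℕ) :
    Lmat n * (Jm n) ^ m =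
      Matrix.of fun (i : Fin n) (k : Fin (n + 1)) =>
        if (k : ℕ) = (i : ℕ) + m then 1 else 0 := by
  rw [Jpow]
  ext i k
  simp only [Matrix.mul_apply, Matrix.of_apply, Lmat]
  have h1 : ∀ c : Fin (n + 1),
      (if (c : ℕ) = (i : ℕ) then (1 : ℤ) else 0) *
        (if (k : ℕ) = (c : ℕ) + m then 1 else 0)
      = if (c : ℕ) = (i : ℕ) then (if (k : ℕ) = (i : ℕ) + m then 1 else 0) else 0 := by
    intro c
    by_cases hc : (c : ℕ) = (i : ℕ)
    · simp [hc]
    · simp [hc]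
  rw [Finset.sum_congr rfl (fun c _ => h1 c), fin_sum_ite, dif_pos (by omega)]

lemma LJ (n : ℕ) : Lmat n * Jm n = Rmat n := by
  have h := LJpow n 1
  rw [pow_one] at h
  rw [h]
  rfl

lemma PXQ (n : ℕ) : Pm n * Xp n + Qm n = Em n + Em n := by
  ext j a
  have hj := j.isLt
  have ha := a.isLt
  simp only [Matrix.add_apply, Matrix.mul_apply, Pm, Qm, Em,
    Matrix.sub_apply, Matrix.transpose_apply, Rmat, Lmat, Xp, Matrix.of_apply,
    sub_mul, ite_mul, one_mul, zero_mul, Finset.sum_sub_distrib]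
  rw [sum_ite_eq_succ (f := fun c => if (a : ℕ) = (c : ℕ) then (1:ℤ)
        else if (a : ℕ) < (c : ℕ) then 2 else 0),
      sum_ite_eq_val (f := fun c => if (a : ℕ) = (c : ℕ) then (1:ℤ)
        else if (a : ℕ) < (c : ℕ) then 2 else 0)]
  split_ifs <;> first
    | omega
    | (simp only [Fin.val_mk] at *; omega)

lemma kronecker_sub' {l m p q : Type*} (A : Matrix l m ℤ) (B C : Matrix p q ℤ) :
    A ⊗ₖ (B - C) = A ⊗ₖ B - A ⊗ₖ C := by
  ext ⟨i, j⟩ ⟨k, l⟩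
  simp [Matrix.kroneckerMap_apply, mul_sub]

def Gm (n : ℕ) : Matrix (Fin n × Fin (n + 1)) (Fin (n + 1) × Fin n) ℤ :=
  ∑ s ∈ Finset.range (n + 1), (Lmat n * (Jm n) ^ (s + 1)) ⊗ₖ (Em n * (Xp n) ^ s)

lemma Z_eq (n : ℕ) :
    aztecMat n * Um n = Lmat n ⊗ₖ Pm n + (Gm n + Gm n) := by
  rw [aztec_decomp, Um, Matrix.mul_sum]
  have hterm : ∀ s ∈ Finset.range (n + 1),
      (Lmat n ⊗ₖ Pm n + Rmat n ⊗ₖ Qm n) * (((Jm n) ^ s) ⊗ₖ ((Xp n) ^ s))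
      = (((Lmat n * (Jm n) ^ s) ⊗ₖ (Pm n * (Xp n) ^ s)
          - (Lmat n * (Jm n) ^ (s + 1)) ⊗ₖ (Pm n * (Xp n) ^ (s + 1)))
        + ((Lmat n * (Jm n) ^ (s + 1)) ⊗ₖ (Em n * (Xp n) ^ s)
          + (Lmat n * (Jm n) ^ (s + 1)) ⊗ₖ (Em n * (Xp n) ^ s))) := by
    intro s _
    rw [Matrix.add_mul, ← Matrix.mul_kronecker_mul, ← Matrix.mul_kronecker_mul]
    have hR : Rmat n * (Jm n) ^ s = Lmat n * (Jm n) ^ (s + 1) := by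
      rw [← LJ, pow_succ', Matrix.mul_assoc]
    have hQ0 : Qm n = Em n + Em n - Pm n * Xp n := by
      have h := PXQ n
      rw [← h]
      abel
    have hQ : Qm n * (Xp n) ^ s
        = Em n * (Xp n) ^ s + Em n * (Xp n) ^ s - Pm n * (Xp n) ^ (s + 1) := by
      rw [hQ0, Matrix.sub_mul, Matrix.add_mul, pow_succ', Matrix.mul_assoc]
    rw [hR, hQ, kronecker_sub', Matrix.kronecker_add]
    abel
  rw [Finset.sum_congr rfl hterm, Finset.sum_add_distrib, Finset.sum_sub_distrib]
  have htel : (∑ s ∈ Finset.range (n + 1), (Lmat n * (Jm n) ^ s) ⊗ₖ (Pm n * (Xp n) ^ s))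
      - (∑ s ∈ Finset.range (n + 1), (Lmat n * (Jm n) ^ (s + 1)) ⊗ₖ (Pm n * (Xp n) ^ (s + 1)))
      = Lmat n ⊗ₖ Pm n := by
    rw [← Finset.sum_sub_distrib,
      Finset.sum_range_sub' (f := fun s => (Lmat n * (Jm n) ^ s) ⊗ₖ (Pm n * (Xp n) ^ s))]
    rw [Jpow_top, Matrix.mul_zero, Matrix.zero_kronecker, sub_zero, pow_zero, pow_zero,
      Matrix.mul_one, Matrix.mul_one]
  rw [htel, Finset.sum_add_distrib]
  rfl

lemma Um_apply (n : ℕ) (p q : Fin (n + 1) × Fin n) :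
    Um n p q = ∑ s ∈ Finset.range (n + 1), ((Jm n) ^ s) p.1 q.1 * ((Xp n) ^ s) p.2 q.2 := by
  rcases p with ⟨k, a⟩
  rcases q with ⟨k', a'⟩
  simp [Um, Matrix.sum_apply, Matrix.kroneckerMap_apply]

lemma Um_blockTri (n : ℕ) : (Um n).BlockTriangular (fun p => (p.1 : ℕ)) := by
  intro p q hlt
  have hlt' : (q.1 : ℕ) < (p.1 : ℕ) := hlt
  rw [Um_apply]
  apply Finset.sum_eq_zero
  intro s _
  rw [Jpow]
  rw [Matrix.of_apply, if_neg (by omega), zero_mul]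

lemma det_Um (n : ℕ) : (Um n).det = 1 := by
  rw [Matrix.BlockTriangular.det (Um_blockTri n)]
  apply Finset.prod_eq_one
  intro m _
  have hblock : (Um n).toSquareBlock (fun p => (p.1 : ℕ)) m = 1 := by
    ext ⟨⟨k, a⟩, hk⟩ ⟨⟨k', a'⟩, hk'⟩
    simp only [Matrix.toSquareBlock_def, Matrix.of_apply] at hk hk' ⊢
    rw [Um_apply]
    have hkk' : k = k' := by
      apply Fin.ext
      omega
    subst hkk'
    have hterm : ∀ s ∈ Finset.range (n + 1),
        ((Jm n) ^ s) k k * ((Xp n) ^ s) a a'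
        = if s = 0 then (if a' = a then 1 else 0) else 0 := by
      intro s _
      rw [Jpow, Matrix.of_apply]
      rcases s with _ | s'
      · simp [Matrix.one_apply, Xp, eq_comm]
      · rw [if_neg (by omega), zero_mul, if_neg (by omega)]
    rw [Finset.sum_congr rfl hterm, Finset.sum_ite_eq' (Finset.range (n + 1)) 0
      (fun _ => if a' = a then (1 : ℤ) else 0)]
    rw [if_pos (by simp)]
    rw [Matrix.one_apply]
    simp [Subtype.ext_iff, Prod.ext_iff, Fin.ext_iff, eq_comm]
  rw [hblock, Matrix.det_one]

lemma hD_zero (n : ℕ) (a : Fin n) : hD n 0 a = 1 := by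
  simp [hD, Matrix.one_apply]

lemma hD_succ (n s : ℕ) (a : Fin n) :
    hD n (s + 1) a = ∑ d, hD n s d * Xp n d a := by
  unfold hD
  rw [pow_succ]
  simp only [Matrix.mul_apply]
  rw [Finset.sum_comm]
  exact Finset.sum_congr rfl fun d _ => (Finset.sum_mul _ _ _).symm

lemma hockey (t j : ℕ) :
    (∑ i ∈ Finset.range t, (i.choose j : ℤ)) = (t.choose (j + 1) : ℤ) := by
  induction t with
  | zero => simp
  | succ t ih =>
    rw [Finset.sum_range_succ, ih]
    have hp : ((t+1).choose (j+1) : ℤ) = (t.choose j : ℤ) + (t.choose (j+1) : ℤ) := by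
      have := Nat.choose_succ_succ t j
      push_cast [this, Nat.succ_eq_add_one]
      ring
    rw [hp]
    ring

lemma DD_rec (n s t : ℕ) (ht : t < n) :
    DD n (s + 1) t = DD n s t + 2 * ∑ t' ∈ Finset.range t, DD n s t' := by
  have hsum : ∑ t' ∈ Finset.range t, DD n s t'
      = ∑ j ∈ Finset.range n, 2 ^ j * (s.choose j : ℤ) * (t.choose (j + 1) : ℤ) := by
    unfold DD
    rw [Finset.sum_comm]
    apply Finset.sum_congr rfl
    intro j _
    rw [← Finset.mul_sum, hockey]
  rw [hsum]
  unfold DD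
  obtain ⟨m, rfl⟩ : ∃ m, n = m + 1 := ⟨n - 1, by omega⟩
  rw [Finset.sum_range_succ' (fun j => (2:ℤ) ^ j * ((s+1).choose j : ℤ) * (t.choose j : ℤ)) m,
      Finset.sum_range_succ' (fun j => (2:ℤ) ^ j * (s.choose j : ℤ) * (t.choose j : ℤ)) m,
      Finset.sum_range_succ (fun j => (2:ℤ) ^ j * (s.choose j : ℤ) * (t.choose (j + 1) : ℤ)) m]
  have hz : (t.choose (m + 1) : ℤ) = 0 := by
    norm_cast
    exact Nat.choose_eq_zero_of_lt (by omega)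
  have hsplit : ∀ j ∈ Finset.range m,
      (2:ℤ) ^ (j+1) * (((s+1).choose (j+1) : ℕ) : ℤ) * ((t.choose (j+1) : ℕ) : ℤ)
      = (2:ℤ) ^ (j+1) * ((s.choose (j+1) : ℕ) : ℤ) * ((t.choose (j+1) : ℕ) : ℤ)
        + 2 * ((2:ℤ) ^ j * ((s.choose j : ℕ) : ℤ) * ((t.choose (j+1) : ℕ) : ℤ)) := by
    intro j _
    have : (s+1).choose (j+1) = s.choose j + s.choose (j+1) := Nat.choose_succ_succ s j
    rw [this]
    push_cast
    ring
  rw [Finset.sum_congr rfl hsplit, Finset.sum_add_distrib]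
  simp only [hz, mul_zero, add_zero, Nat.choose_zero_right, Nat.cast_one, pow_zero, mul_one,
    one_mul]
  rw [Finset.mul_sum]
  ring

open Finset in
lemma sum_gt (n s : ℕ) (hn : 0 < n) (a : Fin n) :
    (∑ d : Fin n, if (a : ℕ) < (d : ℕ) then 2 * DD n s (n - 1 - (d : ℕ)) else 0)
      = 2 * ∑ t' ∈ Finset.range (n - 1 - (a : ℕ)), DD n s t' := by
  rw [← Finset.sum_filter, Finset.mul_sum]
  refine Finset.sum_nbij' (i := fun d => n - 1 - ((d : Fin n) : ℕ))
    (j := fun t' => (⟨n - 1 - t', by omega⟩ : Fin n)) ?_ ?_ ?_ ?_ ?_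
  · intro d hd
    simp only [Finset.mem_filter, Finset.mem_univ, true_and] at hd
    have := d.isLt
    simp only [Finset.mem_range]
    omega
  · intro t' ht'
    simp only [Finset.mem_range] at ht'
    simp only [Finset.mem_filter, Finset.mem_univ, true_and]
    have := a.isLt
    show (a : ℕ) < n - 1 - t'
    omega
  · intro d hd
    simp only [Finset.mem_filter, Finset.mem_univ, true_and] at hd
    have := d.isLt
    apply Fin.ext
    simp only [Fin.val_mk]
    omega
  · intro t' ht'
    simp only [Finset.mem_range] at ht'
    simp only [Fin.val_mk]
    omega
  · intro d hd
    rfl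

lemma hD_eq_DD (n : ℕ) : ∀ s (a : Fin n), hD n s a = DD n s (n - 1 - (a : ℕ)) := by
  intro s
  induction s with
  | zero =>
    intro a
    have ha := a.isLt
    rw [hD_zero]
    unfold DD
    rw [Finset.sum_eq_single 0]
    · simp
    · intro b _ hb
      obtain ⟨b', rfl⟩ : ∃ b', b = b' + 1 := ⟨b - 1, by omega⟩
      simp [Nat.choose_zero_succ]
    · intro h
      exact absurd (Finset.mem_range.2 (by omega)) h
  | succ s ih =>
    intro a
    have ha := a.isLt
    rw [hD_succ]
    have hXd : ∀ d : Fin n, hD n s d * Xp n d a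
        = (if (a : ℕ) = (d : ℕ) then DD n s (n - 1 - (a : ℕ)) else 0)
          + (if (a : ℕ) < (d : ℕ) then 2 * DD n s (n - 1 - (d : ℕ)) else 0) := by
      intro d
      rw [ih d]
      simp only [Xp, Matrix.of_apply]
      by_cases h1 : (a : ℕ) = (d : ℕ)
      · rw [if_pos h1, if_pos h1, if_neg (by omega), h1]
        ring
      · rw [if_neg h1, if_neg h1]
        by_cases h2 : (a : ℕ) < (d : ℕ)
        · rw [if_pos h2, if_pos h2]
          ring
        · rw [if_neg h2, if_neg h2]
          ring
    rw [Finset.sum_congr rfl (fun d _ => hXd d), Finset.sum_add_distrib,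
      sum_ite_eq_val (f := fun _ => DD n s (n - 1 - (a : ℕ))) (a : ℕ),
      dif_pos a.isLt, sum_gt n s (by omega) a, DD_rec n s _ (by omega)]

def Bp (n : ℕ) : Matrix (Fin n) (Fin n) ℤ := Matrix.of fun s j => ((s : ℕ).choose (j : ℕ) : ℤ)
def Dg (n : ℕ) : Matrix (Fin n) (Fin n) ℤ := Matrix.diagonal fun j => (2 : ℤ) ^ (j : ℕ)
def DDm (n : ℕ) : Matrix (Fin n) (Fin n) ℤ := Matrix.of fun s t => DD n (s : ℕ) (t : ℕ)
def Pnn (n : ℕ) : Matrix (Fin n) (Fin n) ℤ := Matrix.of fun j a => Pm n j.castSucc a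
def Ym (n : ℕ) : Matrix (Fin n) (Fin n) ℤ := Matrix.of fun i a => hD n (n - 1 - (i : ℕ)) a

lemma DDm_eq (n : ℕ) : DDm n = Bp n * Dg n * (Bp n)ᵀ := by
  have h1 : Bp n * Dg n = Matrix.of fun (s j : Fin n) => ((s:ℕ).choose (j:ℕ) : ℤ) * 2 ^ (j:ℕ) := by
    ext s j
    rw [Dg, Matrix.mul_diagonal]
    rfl
  rw [h1]
  ext s t
  simp only [DDm, Matrix.of_apply, DD, Matrix.mul_apply, Matrix.transpose_apply, Bp]
  rw [← Fin.sum_univ_eq_sum_range (fun j => (2:ℤ) ^ j * ((s:ℕ).choose j : ℤ) * ((t:ℕ).choose j : ℤ)) n]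
  apply Finset.sum_congr rfl
  intro j _
  ring

lemma det_Bp (n : ℕ) : (Bp n).det = 1 := by
  rw [Matrix.det_of_lowerTriangular (Bp n) ?h]
  · apply Finset.prod_eq_one
    intro i _
    simp [Bp]
  · intro i j hij
    have : (i : ℕ) < (j : ℕ) := hij
    simp only [Bp, Matrix.of_apply]
    norm_cast
    exact Nat.choose_eq_zero_of_lt this

lemma det_Dg (n : ℕ) : (Dg n).det = 2 ^ (n * (n - 1) / 2) := by
  rw [Dg, Matrix.det_diagonal, Finset.prod_pow_eq_pow_sum]
  congr 1
  rw [Fin.sum_univ_eq_sum_range (fun j => j) n, Finset.sum_range_id]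

lemma det_DDm (n : ℕ) : (DDm n).det = 2 ^ (n * (n - 1) / 2) := by
  rw [DDm_eq, Matrix.det_mul, Matrix.det_mul, Matrix.det_transpose, det_Bp, det_Dg]
  ring

lemma det_Pnn (n : ℕ) : (Pnn n).det = (-1) ^ n := by
  rw [Matrix.det_of_lowerTriangular (Pnn n) ?h]
  · rw [Finset.prod_congr rfl (g := fun _ => (-1 : ℤ)) ?_, Finset.prod_const]
    · simp
    · intro i _
      simp only [Pnn, Pm, Matrix.of_apply, Matrix.sub_apply, Matrix.transpose_apply,
        Rmat, Lmat, Fin.coe_castSucc]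
      rw [if_neg (by omega)]
      simp
  · intro i j hij
    have hij' : (i : ℕ) < (j : ℕ) := hij
    simp only [Pnn, Pm, Matrix.of_apply, Matrix.sub_apply, Matrix.transpose_apply,
      Rmat, Lmat, Fin.coe_castSucc]
    rw [if_neg (by omega), if_neg (by omega)]
    ring

lemma hYm (n : ℕ) : Ym n = (DDm n).submatrix Fin.revPerm Fin.revPerm := by
  ext i a
  simp only [Ym, DDm, Matrix.of_apply, Matrix.submatrix_apply, Fin.revPerm_apply, Fin.val_rev]
  rw [hD_eq_DD]
  congr 1 <;> omega

lemma det_Ym (n : ℕ) : (Ym n).det = 2 ^ (n * (n - 1) / 2) := by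
  rw [hYm, Matrix.det_submatrix_equiv_self, det_DDm]

lemma EX (n s : ℕ) (j : Fin (n + 1)) (a : Fin n) :
    (Em n * (Xp n) ^ s) j a = if (j : ℕ) = n then hD n s a else 0 := by
  simp only [Matrix.mul_apply, Em, Matrix.of_apply, ite_mul, one_mul, zero_mul]
  by_cases hj : (j : ℕ) = n
  · simp [hj, hD]
  · simp [hj]

lemma Gm_apply (n : ℕ) (i : Fin n) (j : Fin (n + 1)) (k : Fin (n + 1)) (a : Fin n) :
    Gm n (i, j) (k, a)
      = if (j : ℕ) = n then
          (if (i : ℕ) < (k : ℕ) then hD n ((k : ℕ) - (i : ℕ) - 1) a else 0)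
        else 0 := by
  unfold Gm
  simp only [Matrix.sum_apply, Matrix.kroneckerMap_apply]
  have hterm : ∀ s ∈ Finset.range (n + 1),
      (Lmat n * (Jm n) ^ (s + 1)) i k * (Em n * (Xp n) ^ s) j a
      = if (j : ℕ) = n then
          (if (i : ℕ) < (k : ℕ) then (if (k : ℕ) - (i : ℕ) - 1 = s then hD n s a else 0) else 0)
        else 0 := by
    intro s _
    rw [LJpow, EX, Matrix.of_apply]
    by_cases hj : (j : ℕ) = n
    · rw [if_pos hj, if_pos hj]
      by_cases hik : (i : ℕ) < (k : ℕ)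
      · rw [if_pos hik]
        by_cases hs : (k : ℕ) = (i : ℕ) + (s + 1)
        · rw [if_pos hs, if_pos (by omega), one_mul]
        · rw [if_neg hs, if_neg (by omega), zero_mul]
      · rw [if_neg hik, if_neg (by omega), zero_mul]
    · rw [if_neg hj, if_neg hj, mul_zero]
  rw [Finset.sum_congr rfl hterm]
  by_cases hj : (j : ℕ) = n
  · simp only [hj, if_pos rfl]
    by_cases hik : (i : ℕ) < (k : ℕ)
    · simp only [hik, if_pos]
      rw [Finset.sum_ite_eq (Finset.range (n + 1)) ((k : ℕ) - (i : ℕ) - 1) (fun s => hD n s a)]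
      have hk := k.isLt
      rw [if_pos (Finset.mem_range.2 (by omega))]
    · simp [hik]
  · simp [hj]

def eSplit (n : ℕ) : (Fin n × Fin n) ⊕ Fin n ≃ Fin n × Fin (n + 1) where
  toFun x := Sum.elim (fun p : Fin n × Fin n => (p.1, p.2.castSucc))
    (fun i => (i, Fin.last n)) x
  invFun p := Fin.lastCases (Sum.inr p.1) (fun j => Sum.inl (p.1, j)) p.2
  left_inv x := by
    rcases x with ⟨i, j⟩ | i
    · simp
    · simp
  right_inv p := by
    rcases p with ⟨i, j⟩
    induction j using Fin.lastCases with
    | last => simp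
    | cast j => simp

lemma tri_arith (n : ℕ) : n + n * (n - 1) / 2 = n * (n + 1) / 2 := by
  rcases n with _ | m
  · rfl
  · obtain ⟨c, hc⟩ : Even (m * (m + 1)) := Nat.even_mul_succ_self m
    have e1 : (m + 1) * (m + 1 - 1) = m * (m + 1) := by rw [Nat.add_sub_cancel]; ring
    have e2 : (m + 1) * (m + 1 + 1) = m * (m + 1) + 2 * (m + 1) := by ring
    rw [e1, e2, hc]
    omega


/-- **The determinant of the Aztec-diamond Kasteleyn–Percus matrix.**
`|det M_A(n)| = 2^(n(n+1)/2)`, the number of domino tilings of the Aztec diamond of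
order `n`.  (The columns are reindexed by the bijection `Fin (n+1) × Fin n ≃
Fin n × Fin (n+1)` to make the matrix square; this does not change `|det|`.) -/
theorem absdet_aztecMat (n : ℕ) :
    ((Matrix.reindex (Equiv.refl (Fin n × Fin (n + 1)))
        (Equiv.prodComm (Fin (n + 1)) (Fin n)) (aztecMat n)).det).natAbs =
      2 ^ (n * (n + 1) / 2) := by
  classical
  set σ := Equiv.prodComm (Fin (n + 1)) (Fin n) with hσ
  set S : Matrix (Fin n × Fin (n + 1)) (Fin n × Fin (n + 1)) ℤ :=
    (aztecMat n * Um n).submatrix (Equiv.refl (Fin n × Fin (n + 1))) σ.symm with hS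
  have h1 : (Matrix.reindex (Equiv.refl (Fin n × Fin (n + 1))) σ (aztecMat n)).det = S.det := by
    have hmul : (Matrix.reindex (Equiv.refl (Fin n × Fin (n + 1))) σ (aztecMat n))
        * ((Um n).submatrix σ.symm σ.symm) = S := by
      rw [Matrix.reindex_apply]
      simp only [Equiv.refl_symm]
      exact Matrix.submatrix_mul_equiv _ _ _ _ _
    have h2 := Matrix.det_mul (Matrix.reindex (Equiv.refl (Fin n × Fin (n + 1))) σ (aztecMat n))
      ((Um n).submatrix σ.symm σ.symm)
    rw [hmul, Matrix.det_submatrix_equiv_self σ.symm (Um n), det_Um, mul_one] at h2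
    exact h2.symm
  rw [h1]
  -- Entries of S
  have hSapply : ∀ (i : Fin n) (j : Fin (n + 1)) (c1 : Fin n) (c2 : Fin (n + 1)),
      S (i, j) (c1, c2) = Lmat n i c2 * Pm n j c1
        + (Gm n (i, j) (c2, c1) + Gm n (i, j) (c2, c1)) := by
    intro i j c1 c2
    rw [hS]
    simp only [Matrix.submatrix_apply, Equiv.refl_apply, Equiv.prodComm_symm,
      Equiv.prodComm_apply, Prod.swap_prod_mk]
    rw [Z_eq n]
    simp only [Matrix.add_apply, Matrix.kroneckerMap_apply]
    rfl
  -- the block pieces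
  set er : (Fin n × Fin n) ⊕ Fin n ≃ Fin n × Fin (n + 1) := eSplit n with her
  set ec : (Fin n × Fin n) ⊕ Fin n ≃ Fin n × Fin (n + 1) :=
    (Equiv.sumCongr (Equiv.prodComm (Fin n) (Fin n)) (Equiv.refl (Fin n))).trans (eSplit n)
    with hec
  set W := S.submatrix er ec with hW
  have habs : W.det.natAbs = S.det.natAbs := by
    have hperm : W = (S.submatrix er er).submatrix id ⇑(ec.trans er.symm) := by
      ext r c
      rw [hW]
      simp [Matrix.submatrix_apply]
    rw [hperm, Matrix.det_permute' (ec.trans er.symm) (S.submatrix er er),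
      Matrix.det_submatrix_equiv_self er S, Int.natAbs_mul]
    simp [Int.units_natAbs]
  rw [← habs]
  -- blocks of W
  have hB12 : W.toBlocks₁₂ = 0 := by
    ext ⟨i, j⟩ a
    simp only [Matrix.toBlocks₁₂, Matrix.of_apply, hW, Matrix.submatrix_apply, Matrix.zero_apply]
    have he1 : er (Sum.inl (i, j)) = (i, j.castSucc) := rfl
    have he2 : ec (Sum.inr a) = (a, Fin.last n) := rfl
    rw [he1, he2, hSapply, Gm_apply]
    rw [if_neg (by simp [Fin.coe_castSucc]; omega)]
    simp only [Lmat, Matrix.of_apply, Fin.val_last]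
    rw [if_neg (by have := i.isLt; omega)]
    ring
  have hB11 : W.toBlocks₁₁ = (1 : Matrix (Fin n) (Fin n) ℤ) ⊗ₖ Pnn n := by
    ext ⟨i, j⟩ ⟨k, a⟩
    simp only [Matrix.toBlocks₁₁, Matrix.of_apply, hW, Matrix.submatrix_apply,
      Matrix.kroneckerMap_apply]
    have he1 : er (Sum.inl (i, j)) = (i, j.castSucc) := rfl
    have he2 : ec (Sum.inl (k, a)) = (a, k.castSucc) := rfl
    rw [he1, he2, hSapply, Gm_apply]
    rw [if_neg (by simp [Fin.coe_castSucc]; omega)]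
    simp only [Lmat, Matrix.of_apply, Fin.coe_castSucc, Pnn]
    rw [Matrix.one_apply]
    rcases eq_or_ne i k with h | h
    · subst h
      simp
    · rw [if_neg (fun hc => h (Fin.ext hc.symm)), if_neg (by exact h)]
      ring
  have hB22 : W.toBlocks₂₂ = (2 : ℤ) • Ym n := by
    ext i a
    simp only [Matrix.toBlocks₂₂, Matrix.of_apply, hW, Matrix.submatrix_apply,
      Matrix.smul_apply, smul_eq_mul]
    have he1 : er (Sum.inr i) = (i, Fin.last n) := rfl
    have he2 : ec (Sum.inr a) = (a, Fin.last n) := rfl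
    rw [he1, he2, hSapply, Gm_apply]
    simp only [Lmat, Matrix.of_apply, Fin.val_last]
    rw [if_neg (by have := i.isLt; omega)]
    simp only [if_true]
    rw [if_pos i.isLt]
    have hidx : n - (i : ℕ) - 1 = n - 1 - (i : ℕ) := by omega
    rw [hidx]
    simp only [Ym, Matrix.of_apply]
    ring
  have hdetW : W.det = ((1 : Matrix (Fin n) (Fin n) ℤ) ⊗ₖ Pnn n).det * ((2 : ℤ) • Ym n).det := by
    conv_lhs => rw [← Matrix.fromBlocks_toBlocks W]
    rw [hB11, hB12, hB22, Matrix.det_fromBlocks_zero₁₂]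
  rw [hdetW, Int.natAbs_mul]
  have hk : ((1 : Matrix (Fin n) (Fin n) ℤ) ⊗ₖ Pnn n).det.natAbs = 1 := by
    rw [Matrix.det_kronecker, Matrix.det_one, one_pow, one_mul, det_Pnn, ← pow_mul,
      Int.natAbs_pow]
    simp
  have hs : ((2 : ℤ) • Ym n).det.natAbs = 2 ^ (n + n * (n - 1) / 2) := by
    rw [Matrix.det_smul, det_Ym, Fintype.card_fin, ← pow_add, Int.natAbs_pow]
    rfl
  rw [hk, hs, one_mul, tri_arith]
end

section
/- Let D : ℕ × ℕ → ℤ be the Delannoy numbers, defined by the recurrence D(i, 0) = D(0, j) = 1 for all i, j, and D(i+1, j+1) = D(i+1, j) + D(i, j+1) + D(i, j). Then for all i, j: D(i, j) = Σ_k C(i, k) * C(j, k) * 2^k, where C denotes the binomial coefficient and the sum ranges over all k (it is finite since C(i,k) = 0 for k > i). -/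
open Finset

private lemma pascal_sum (n : ℕ) (g : ℕ → ℤ) :
    ∑ k ∈ Finset.range (n + 2), ((n + 1).choose k : ℤ) * g k
      = ∑ k ∈ Finset.range (n + 1), (n.choose k : ℤ) * g k
        + ∑ k ∈ Finset.range (n + 1), (n.choose k : ℤ) * g (k + 1) := by
  have h1 : ∑ k ∈ Finset.range (n + 2), ((n + 1).choose k : ℤ) * g k
      = (∑ k ∈ Finset.range (n + 1), ((n + 1).choose (k + 1) : ℤ) * g (k + 1)) + g 0 := by
    rw [Finset.sum_range_succ']; simp
  have h2 : ∑ k ∈ Finset.range (n + 1), ((n + 1).choose (k + 1) : ℤ) * g (k + 1)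
      = ∑ k ∈ Finset.range (n + 1), (n.choose k : ℤ) * g (k + 1)
        + ∑ k ∈ Finset.range (n + 1), (n.choose (k + 1) : ℤ) * g (k + 1) := by
    rw [← Finset.sum_add_distrib]
    refine Finset.sum_congr rfl fun k _ => ?_
    rw [Nat.choose_succ_succ]
    push_cast; ring
  have h3 : (∑ k ∈ Finset.range (n + 1), (n.choose (k + 1) : ℤ) * g (k + 1)) + g 0
      = ∑ k ∈ Finset.range (n + 1), (n.choose k : ℤ) * g k := by
    have := Finset.sum_range_succ' (fun k => (n.choose k : ℤ) * g k) (n + 1)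
    rw [Finset.sum_range_succ (fun k => (n.choose k : ℤ) * g k) (n + 1)] at this
    simp [Nat.choose_succ_self] at this
    linarith [this]
  linarith [h1, h2, h3]

/-- **The binomial formula for Delannoy numbers.** If `D : ℕ × ℕ → ℤ` satisfies the
Delannoy recurrence `D(i,0) = D(0,j) = 1` and
`D(i+1, j+1) = D(i+1, j) + D(i, j+1) + D(i, j)`, then
`D(i, j) = Σₖ C(i,k) * C(j,k) * 2ᵏ`. -/
theorem delannoy_binomial_formula (D : ℕ → ℕ → ℤ)
    (hD0 : ∀ i, D i 0 = 1) (hD0' : ∀ j, D 0 j = 1)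
    (hDrec : ∀ i j, D (i + 1) (j + 1) = D (i + 1) j + D i (j + 1) + D i j) :
    ∀ i j, D i j = ∑ k ∈ Finset.range (i + 1),
      (Nat.choose i k : ℤ) * (Nat.choose j k : ℤ) * 2 ^ k := by
  -- abbreviation
  set S : ℕ → ℕ → ℤ := fun i j => ∑ k ∈ Finset.range (i + 1),
      (Nat.choose i k : ℤ) * (Nat.choose j k : ℤ) * 2 ^ k with hS
  have hS0 : ∀ i, S i 0 = 1 := by
    intro i
    simp only [hS]
    rw [Finset.sum_eq_single 0]
    · simp
    · intro k _ hk
      rcases Nat.exists_eq_succ_of_ne_zero hk with ⟨m, rfl⟩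
      simp [Nat.choose_eq_zero_of_lt (Nat.succ_pos m)]
    · simp
  have hS0' : ∀ j, S 0 j = 1 := by
    intro j; simp [hS]
  have hkey : ∀ i j, S (i + 1) (j + 1) = S (i + 1) j + S i (j + 1) + S i j := by
    intro i j
    have e1 := pascal_sum i (fun k => ((j + 1).choose k : ℤ) * 2 ^ k)
    have e2 := pascal_sum i (fun k => (j.choose k : ℤ) * 2 ^ k)
    simp only [hS]
    have e1' : S (i + 1) (j + 1)
        = ∑ k ∈ Finset.range (i + 1), (i.choose k : ℤ) * ((j + 1).choose k : ℤ) * 2 ^ k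
          + ∑ k ∈ Finset.range (i + 1), (i.choose k : ℤ) * ((j + 1).choose (k + 1) : ℤ) * 2 ^ (k + 1) := by
      simp only [hS]
      simp only [mul_assoc] at e1 ⊢
      exact e1
    have e2' : S (i + 1) j
        = ∑ k ∈ Finset.range (i + 1), (i.choose k : ℤ) * (j.choose k : ℤ) * 2 ^ k
          + ∑ k ∈ Finset.range (i + 1), (i.choose k : ℤ) * (j.choose (k + 1) : ℤ) * 2 ^ (k + 1) := by
      simp only [hS]
      simp only [mul_assoc] at e2 ⊢
      exact e2
    have e3 : ∑ k ∈ Finset.range (i + 1), (i.choose k : ℤ) * ((j + 1).choose (k + 1) : ℤ) * 2 ^ (k + 1)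
        = ∑ k ∈ Finset.range (i + 1), (i.choose k : ℤ) * (j.choose (k + 1) : ℤ) * 2 ^ (k + 1)
          + 2 * ∑ k ∈ Finset.range (i + 1), (i.choose k : ℤ) * (j.choose k : ℤ) * 2 ^ k := by
      rw [Finset.mul_sum, ← Finset.sum_add_distrib]
      refine Finset.sum_congr rfl fun k _ => ?_
      rw [Nat.choose_succ_succ]
      push_cast; ring
    have hSij : S i j = ∑ k ∈ Finset.range (i + 1), (i.choose k : ℤ) * (j.choose k : ℤ) * 2 ^ k := rfl
    have hSij1 : S i (j + 1) = ∑ k ∈ Finset.range (i + 1), (i.choose k : ℤ) * ((j + 1).choose k : ℤ) * 2 ^ k := rfl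
    simp only [hS] at e1' e2' hSij hSij1 ⊢
    linarith [e1', e2', e3]
  intro i
  induction i with
  | zero => intro j; rw [hD0' j]; exact (hS0' j).symm
  | succ i ih =>
    intro j
    induction j with
    | zero => rw [hD0]; exact (hS0 (i + 1)).symm
    | succ j ihj =>
      rw [hDrec, ihj, ih (j + 1), ih j]
      exact (hkey i j).symm
end
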